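/- arXiv:1208.0586 — 4 statements merged into one kernel-verified Lean document; each statement's English description precedes it below -/
import Mathlib

section
/- Let g : ℝ₊ → ℝ be γ-Hölder continuous for some γ ∈ (0,∞), and for β > 0 let A_β = {n^{−β} : n ∈ ℕ} ∪ {0}. Then the upper Minkowski dimension of g(A_β) is at most 1/(1 + γβ). -/
open Filter Metric Set
open scoped Topology

/-- Minimal number of closed balls of radius `ε` needed to cover `A`. -/
noncomputable def covNum {E : Type*} [PseudoMetricSpace E] (A : Set E) (ε : ℝ) : ℕ :=
  sInf {n : ℕ | ∃ s : Finset E, s.card = n ∧ A ⊆ ⋃ x ∈ s, Metric.closedBall x ε}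

/-- Upper Minkowski (box) dimension. -/
noncomputable def udim {E : Type*} [PseudoMetricSpace E] (A : Set E) : ℝ :=
  limsup (fun ε : ℝ => Real.log (covNum A ε) / Real.log (1 / ε)) (𝓝[>] 0)

lemma covNum_le_card {E : Type*} [PseudoMetricSpace E] {A : Set E} {ε : ℝ}
    (s : Finset E) (h : A ⊆ ⋃ x ∈ s, Metric.closedBall x ε) :
    covNum A ε ≤ s.card :=
  Nat.sInf_le ⟨s, rfl, h⟩

/-- Covering a closed interval (ball) in `ℝ` by small closed balls. -/
lemma closedBall_subset_cover (c r ε : ℝ) (hr : 0 ≤ r) (hε : 0 < ε) :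
    Metric.closedBall c r ⊆
      ⋃ i ∈ Finset.range (⌊r / ε⌋₊ + 1),
        Metric.closedBall (c - r + ε + 2 * ε * i) ε := by
  intro y hy
  rw [Metric.mem_closedBall, Real.dist_eq, abs_le] at hy
  set t := y - (c - r) with htdef
  have ht0 : 0 ≤ t := by simp only [htdef]; linarith [hy.2]
  have ht2 : t ≤ 2 * r := by simp only [htdef]; linarith [hy.1]
  set i := ⌊t / (2 * ε)⌋₊ with hidef
  have h2ε : (0 : ℝ) < 2 * ε := by linarith
  have h1 : (i : ℝ) ≤ t / (2 * ε) := Nat.floor_le (by positivity)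
  have h2 : t / (2 * ε) < i + 1 := Nat.lt_floor_add_one _
  have h1' : (i : ℝ) * (2 * ε) ≤ t := (le_div_iff₀ h2ε).1 h1
  have h2' : t < ((i : ℝ) + 1) * (2 * ε) := (div_lt_iff₀ h2ε).1 h2
  have hmem : i ∈ Finset.range (⌊r / ε⌋₊ + 1) := by
    rw [Finset.mem_range, Nat.lt_succ_iff]
    exact Nat.floor_mono (by rw [div_le_div_iff₀ h2ε hε]; ring_nf; nlinarith)
  refine Set.mem_iUnion₂.2 ⟨i, hmem, ?_⟩
  rw [Metric.mem_closedBall, Real.dist_eq, abs_le]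
  constructor <;> [skip; skip] <;>
    · simp only [htdef] at h1' h2' ⊢
      nlinarith

theorem stmt4 (g : ℝ → ℝ) (γ L : ℝ) (hγ : 0 < γ)
    (hhold : ∀ s t : ℝ, 0 ≤ s → 0 ≤ t → |g s - g t| ≤ L * |s - t| ^ γ)
    (β : ℝ) (hβ : 0 < β) :
    udim (g '' ({x : ℝ | ∃ n : ℕ, 0 < n ∧ x = (n : ℝ) ^ (-β)} ∪ {0}))
      ≤ 1 / (1 + γ * β) := by
  set A : Set ℝ := {x : ℝ | ∃ n : ℕ, 0 < n ∧ x = (n : ℝ) ^ (-β)} ∪ {0} with hA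
  set L' : ℝ := max L 1 with hL'
  have hL1 : (1 : ℝ) ≤ L' := le_max_right _ _
  have hL0 : (0 : ℝ) < L' := lt_of_lt_of_le one_pos hL1
  have hhold' : ∀ s t : ℝ, 0 ≤ s → 0 ≤ t → |g s - g t| ≤ L' * |s - t| ^ γ := by
    intro s t hs ht
    refine (hhold s t hs ht).trans ?_
    exact mul_le_mul_of_nonneg_right (le_max_left _ _)
      (Real.rpow_nonneg (abs_nonneg _) γ)
  set θ : ℝ := 1 / (1 + γ * β) with hθ
  have hden : (0 : ℝ) < 1 + γ * β := by nlinarith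
  have hθ0 : 0 < θ := by positivity
  have hθ1 : θ ≤ 1 := by
    rw [hθ, div_le_one hden]; nlinarith
  set C : ℝ := 4 * L' ^ θ with hC
  have hLθ : (1 : ℝ) ≤ L' ^ θ := Real.one_le_rpow hL1 hθ0.le
  have hC1 : (1 : ℝ) ≤ C := by nlinarith
  have hC0 : (0 : ℝ) < C := lt_of_lt_of_le one_pos hC1
  -- key covering estimate
  have key : ∀ ε : ℝ, ε ∈ Set.Ioo (0 : ℝ) 1 →
      (covNum (g '' A) ε : ℝ) ≤ C * ε ^ (-θ) := by
    intro ε ⟨hε0, hε1⟩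
    set X : ℝ := (L' / ε) ^ θ with hX
    have hLε : (1 : ℝ) ≤ L' / ε := by
      rw [le_div_iff₀ hε0]; nlinarith
    have hX1 : (1 : ℝ) ≤ X := Real.one_le_rpow hLε hθ0.le
    have hX0 : (0 : ℝ) < X := lt_of_lt_of_le one_pos hX1
    set M : ℕ := ⌈X⌉₊ with hM
    have hM1 : 1 ≤ M := Nat.one_le_ceil_iff.2 hX0
    have hXM : X ≤ (M : ℝ) := Nat.le_ceil X
    have hM0 : (0 : ℝ) < (M : ℝ) := lt_of_lt_of_le hX0 hXM
    set r : ℝ := L' * (M : ℝ) ^ (-(β * γ)) with hr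
    have hr0 : 0 ≤ r := by positivity
    -- the covering finset
    set s₁ : Finset ℝ := (Finset.Icc 1 M).image (fun n : ℕ => g ((n : ℝ) ^ (-β))) with hs₁
    set s₂ : Finset ℝ := (Finset.range (⌊r / ε⌋₊ + 1)).image
      (fun i : ℕ => g 0 - r + ε + 2 * ε * i) with hs₂
    have hball : ∀ y ∈ Metric.closedBall (g 0) r, y ∈ ⋃ x ∈ s₁ ∪ s₂, Metric.closedBall x ε := by
      intro y hy
      have := closedBall_subset_cover (g 0) r ε hr0 hε0 hy
      rw [Set.mem_iUnion₂] at this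
      obtain ⟨i, hi, hyi⟩ := this
      exact Set.mem_iUnion₂.2 ⟨g 0 - r + ε + 2 * ε * i,
        Finset.mem_union_right _ (Finset.mem_image.2 ⟨i, hi, rfl⟩), hyi⟩
    have hcov : g '' A ⊆ ⋃ x ∈ s₁ ∪ s₂, Metric.closedBall x ε := by
      rintro y ⟨x, hx, rfl⟩
      rcases hx with ⟨n, hn, rfl⟩ | hx0
      · by_cases hnM : n ≤ M
        · refine Set.mem_iUnion₂.2 ⟨g ((n : ℝ) ^ (-β)), ?_, ?_⟩
          · exact Finset.mem_union_left _
              (Finset.mem_image.2 ⟨n, Finset.mem_Icc.2 ⟨hn, hnM⟩, rfl⟩)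
          · simp [hε0.le]
        · push_neg at hnM
          apply hball
          rw [Metric.mem_closedBall, Real.dist_eq]
          have hn0 : (0 : ℝ) < (n : ℝ) := by exact_mod_cast hn
          have hxnn : (0 : ℝ) ≤ (n : ℝ) ^ (-β) := Real.rpow_nonneg hn0.le _
          have h1 : |g ((n : ℝ) ^ (-β)) - g 0| ≤ L' * |(n : ℝ) ^ (-β) - 0| ^ γ :=
            hhold' _ 0 hxnn le_rfl
          rw [sub_zero, abs_of_nonneg hxnn] at h1
          refine h1.trans ?_
          rw [hr]
          apply mul_le_mul_of_nonneg_left _ hL0.le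
          rw [← Real.rpow_mul hn0.le, neg_mul]
          exact Real.rpow_le_rpow_of_nonpos hM0 (by exact_mod_cast hnM.le)
            (by nlinarith)
      · rw [Set.mem_singleton_iff] at hx0
        subst hx0
        apply hball
        rw [Metric.mem_closedBall, dist_self]
        exact hr0
    have hcard : covNum (g '' A) ε ≤ M + (⌊r / ε⌋₊ + 1) := by
      refine (covNum_le_card _ hcov).trans ?_
      refine (Finset.card_union_le _ _).trans ?_
      gcongr
      · exact (Finset.card_image_le).trans (by simp)
      · exact (Finset.card_image_le).trans (by simp)
    -- numeric estimate
    have hrε : r / ε ≤ X := by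
      have hMX : (M : ℝ) ^ (-(β * γ)) ≤ X ^ (-(β * γ)) :=
        Real.rpow_le_rpow_of_nonpos hX0 hXM (by nlinarith)
      have hθeq : θ * (1 + γ * β) = 1 := by
        rw [hθ]; field_simp
      have hexp : 1 + θ * (-(β * γ)) = θ := by linear_combination -hθeq
      have hpos : (0 : ℝ) < L' / ε := lt_of_lt_of_le one_pos hLε
      have hXval : L' / ε * X ^ (-(β * γ)) = X := by
        rw [hX, ← Real.rpow_mul hpos.le]
        nth_rewrite 1 [← Real.rpow_one (L' / ε)]
        rw [← Real.rpow_add hpos, hexp]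
      calc r / ε = L' / ε * (M : ℝ) ^ (-(β * γ)) := by rw [hr]; ring
        _ ≤ L' / ε * X ^ (-(β * γ)) := by
            apply mul_le_mul_of_nonneg_left hMX (by positivity)
        _ = X := hXval
    have hMle : (M : ℝ) ≤ X + 1 := (Nat.ceil_lt_add_one hX0.le).le
    have hfle : (⌊r / ε⌋₊ : ℝ) ≤ X := (Nat.floor_le (by positivity)).trans hrε
    have htot : (covNum (g '' A) ε : ℝ) ≤ 4 * X := by
      have := hcard
      have hcast : (covNum (g '' A) ε : ℝ) ≤ (M : ℝ) + ((⌊r / ε⌋₊ : ℝ) + 1) := by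
        exact_mod_cast this
      nlinarith
    refine htot.trans ?_
    have : X = L' ^ θ * ε ^ (-θ) := by
      rw [hX, Real.div_rpow hL0.le hε0.le, Real.rpow_neg hε0.le, div_eq_mul_inv]
    rw [this, hC]
    exact le_of_eq (by ring)
  -- pass to the limsup
  set f : ℝ → ℝ := fun ε => Real.log (covNum (g '' A) ε) / Real.log (1 / ε) with hf
  set G : ℝ → ℝ := fun ε => Real.log C / Real.log (1 / ε) + θ with hG
  have hIoo : Set.Ioo (0 : ℝ) 1 ∈ 𝓝[>] (0 : ℝ) :=
    Ioo_mem_nhdsGT_of_mem ⟨le_refl 0, one_pos⟩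
  have hev : ∀ᶠ ε in 𝓝[>] (0 : ℝ), f ε ≤ G ε := by
    filter_upwards [hIoo] with ε hε
    obtain ⟨hε0, hε1⟩ := hε
    have hlog : 0 < Real.log (1 / ε) :=
      Real.log_pos (by rw [lt_div_iff₀ hε0]; linarith)
    have hb := key ε ⟨hε0, hε1⟩
    have hlogb : Real.log (covNum (g '' A) ε) ≤ Real.log C + θ * Real.log (1 / ε) := by
      have hRHS : Real.log (C * ε ^ (-θ)) = Real.log C + θ * Real.log (1 / ε) := by
        rw [Real.log_mul (ne_of_gt hC0) (ne_of_gt (Real.rpow_pos_of_pos hε0 _)),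
          Real.log_rpow hε0, one_div, Real.log_inv]
        ring
      rw [← hRHS]
      rcases Nat.eq_zero_or_pos (covNum (g '' A) ε) with h0 | hpos
      · rw [h0]
        simp only [Nat.cast_zero, Real.log_zero]
        apply Real.log_nonneg
        have h1 : (1 : ℝ) ≤ ε ^ (-θ) :=
          Real.one_le_rpow_of_pos_of_le_one_of_nonpos hε0 hε1.le (by linarith)
        nlinarith
      · exact Real.log_le_log (by exact_mod_cast hpos) hb
    have : f ε ≤ (Real.log C + θ * Real.log (1 / ε)) / Real.log (1 / ε) := by
      rw [hf]
      exact div_le_div_of_nonneg_right hlogb hlog.le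
    refine this.trans (le_of_eq ?_)
    rw [hG]
    field_simp
  have hlogtop : Tendsto (fun ε : ℝ => Real.log (1 / ε)) (𝓝[>] (0 : ℝ)) atTop := by
    simp only [one_div, Real.log_inv]
    exact tendsto_neg_atBot_atTop.comp Real.tendsto_log_nhdsGT_zero
  have htend : Tendsto G (𝓝[>] (0 : ℝ)) (𝓝 (0 + θ)) :=
    (Tendsto.div_atTop tendsto_const_nhds hlogtop).add tendsto_const_nhds
  have hnn : ∀ᶠ ε in 𝓝[>] (0 : ℝ), (0 : ℝ) ≤ f ε := by
    filter_upwards [hIoo] with ε hε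
    obtain ⟨hε0, hε1⟩ := hε
    have hlog : 0 < Real.log (1 / ε) :=
      Real.log_pos (by rw [lt_div_iff₀ hε0]; linarith)
    apply div_nonneg _ hlog.le
    rcases Nat.eq_zero_or_pos (covNum (g '' A) ε) with h0 | hpos
    · simp [h0]
    · exact Real.log_nonneg (by exact_mod_cast hpos)
  have hcob : IsCoboundedUnder (· ≤ ·) (𝓝[>] (0 : ℝ)) f :=
    IsCoboundedUnder.of_frequently_ge hnn.frequently
  calc udim (g '' A) = limsup f (𝓝[>] (0 : ℝ)) := rfl
    _ ≤ limsup G (𝓝[>] (0 : ℝ)) := limsup_le_limsup hev hcob htend.isBoundedUnder_le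
    _ = 0 + θ := htend.limsup_eq
    _ = θ := zero_add θ
end

section
/- Let f, g : [0,1] → ℝ be continuous and assume the Minkowski dimension of the graph of f over [0,1] exists (upper equals lower). Then the lower Minkowski dimension of the graph of f + g over [0,1] is at most max{dim_M G(f), lower Minkowski dimension of G(g)}. -/
open Filter Metric Set
open scoped Topology

/-- Lower Minkowski (box) dimension. -/
noncomputable def ldim {E : Type*} [PseudoMetricSpace E] (A : Set E) : ℝ :=
  liminf (fun ε : ℝ => Real.log (covNum A ε) / Real.log (1 / ε)) (𝓝[>] 0)

/-- The graph of `h` over a set `A` of times. -/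
def graphOver {E : Type*} (h : ℝ → E) (A : Set ℝ) : Set (ℝ × E) :=
  (fun t => (t, h t)) '' A

noncomputable def nCols (ε : ℝ) : ℕ := ⌈1 / (2 * ε)⌉₊

noncomputable def colLo (ε : ℝ) (j : ℕ) : ℝ := 2 * ε * j
noncomputable def colHi (ε : ℝ) (j : ℕ) : ℝ := min (2 * ε * (j + 1)) 1
def col (ε : ℝ) (j : ℕ) : Set ℝ := Set.Icc (colLo ε j) (colHi ε j)
noncomputable def oscCol (h : ℝ → ℝ) (ε : ℝ) (j : ℕ) : ℝ :=
  sSup (h '' col ε j) - sInf (h '' col ε j)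

lemma col_lo_le_hi {ε : ℝ} (hε : 0 < ε) {j : ℕ} (hj : j < nCols ε) :
    colLo ε j ≤ colHi ε j := by
  have h1 : (j : ℝ) < 1 / (2 * ε) := Nat.lt_ceil.mp hj
  have h2 : 2 * ε * j < 1 := by
    rw [mul_comm]
    rw [lt_div_iff₀ (by linarith)] at h1
    linarith
  unfold colLo colHi
  have : 2 * ε * j ≤ 2 * ε * (j + 1) := by nlinarith
  exact le_min this h2.le

lemma col_subset {ε : ℝ} (hε : 0 < ε) (j : ℕ) : col ε j ⊆ Set.Icc 0 1 := by
  apply Set.Icc_subset_Icc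
  · unfold colLo; positivity
  · exact min_le_right _ _

lemma col_cover {ε : ℝ} (hε : 0 < ε) {t : ℝ} (ht : t ∈ Set.Icc (0:ℝ) 1) :
    ∃ j < nCols ε, t ∈ col ε j := by
  have h2ε : (0:ℝ) < 2 * ε := by linarith
  have hM1 : 1 ≤ nCols ε := by
    unfold nCols
    rw [Nat.one_le_ceil_iff]
    positivity
  by_cases hc : ⌊t / (2 * ε)⌋₊ < nCols ε
  · refine ⟨⌊t / (2 * ε)⌋₊, hc, ?_, ?_⟩
    · unfold colLo
      have := Nat.floor_le (a := t / (2 * ε)) (div_nonneg ht.1 h2ε.le)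
      calc 2 * ε * (⌊t / (2*ε)⌋₊ : ℝ) ≤ 2 * ε * (t / (2 * ε)) := by nlinarith
        _ = t := by field_simp
    · unfold colHi
      have := Nat.lt_floor_add_one (t / (2 * ε))
      refine le_min ?_ ht.2
      rw [div_lt_iff₀ h2ε] at this
      linarith [this]
  · push_neg at hc
    have ht1 : 1 ≤ t := by
      have : (nCols ε : ℝ) ≤ ⌊t / (2*ε)⌋₊ := Nat.cast_le.mpr hc
      have h3 : (1 : ℝ) / (2*ε) ≤ nCols ε := Nat.le_ceil _
      have h4 : (⌊t / (2*ε)⌋₊ : ℝ) ≤ t / (2*ε) := Nat.floor_le (div_nonneg ht.1 h2ε.le)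
      have : (1:ℝ) / (2*ε) ≤ t / (2*ε) := by linarith
      calc (1:ℝ) = (1/(2*ε)) * (2*ε) := by field_simp
        _ ≤ (t/(2*ε)) * (2*ε) := by nlinarith
        _ = t := by field_simp
    have ht' : t = 1 := le_antisymm ht.2 ht1
    refine ⟨nCols ε - 1, by omega, ?_, ?_⟩
    · unfold colLo
      have hcast : ((nCols ε - 1 : ℕ) : ℝ) = (nCols ε : ℝ) - 1 := by
        rw [Nat.cast_sub hM1]; norm_num
      have := Nat.ceil_lt_add_one (a := 1/(2*ε)) (by positivity)
      rw [hcast, ht']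
      have : (nCols ε : ℝ) - 1 < 1/(2*ε) := by
        unfold nCols; linarith [this]
      calc 2*ε*((nCols ε:ℝ)-1) ≤ 2*ε*(1/(2*ε)) := by nlinarith
        _ = 1 := by field_simp
    · unfold colHi
      rw [ht']
      refine le_min ?_ le_rfl
      have hcast : ((nCols ε - 1 : ℕ) : ℝ) + 1 = (nCols ε : ℝ) := by
        rw [Nat.cast_sub hM1]; norm_num
      rw [hcast]
      have h3 : (1 : ℝ) / (2*ε) ≤ nCols ε := Nat.le_ceil _
      calc (1:ℝ) = (1/(2*ε)) * (2*ε) := by field_simp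
        _ ≤ (nCols ε : ℝ) * (2*ε) := by nlinarith
        _ = 2*ε*(nCols ε:ℝ) := by ring

lemma covNum_le {E : Type*} [PseudoMetricSpace E] {A : Set E} {ε : ℝ} {s : Finset E}
    (h : A ⊆ ⋃ x ∈ s, Metric.closedBall x ε) : covNum A ε ≤ s.card :=
  Nat.sInf_le ⟨s, rfl, h⟩

lemma exists_covNum {E : Type*} [PseudoMetricSpace E] {A : Set E} {ε : ℝ}
    (hA : IsCompact A) (hε : 0 < ε) :
    ∃ s : Finset E, s.card = covNum A ε ∧ A ⊆ ⋃ x ∈ s, Metric.closedBall x ε := by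
  have hne : {n : ℕ | ∃ s : Finset E, s.card = n ∧ A ⊆ ⋃ x ∈ s, Metric.closedBall x ε}.Nonempty := by
    obtain ⟨t, htfin, hcov⟩ := (totallyBounded_iff.mp hA.totallyBounded) ε hε
    classical
    refine ⟨htfin.toFinset.card, htfin.toFinset, rfl, hcov.trans ?_⟩
    apply Set.iUnion₂_subset
    intro x hx
    refine Set.subset_iUnion₂_of_subset x (by simpa using hx) ball_subset_closedBall
  exact Nat.sInf_mem hne

lemma one_le_covNum {E : Type*} [PseudoMetricSpace E] {A : Set E} {ε : ℝ}
    (hA : IsCompact A) (hne : A.Nonempty) (hε : 0 < ε) : 1 ≤ covNum A ε := by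
  obtain ⟨s, hcard, hcov⟩ := exists_covNum hA hε
  rcases hne with ⟨a, ha⟩
  rcases Set.mem_iUnion₂.mp (hcov ha) with ⟨x, hx, -⟩
  have := Finset.card_pos.mpr ⟨x, hx⟩
  omega

lemma image_col_eq {h : ℝ → ℝ} (hh : ContinuousOn h (Set.Icc 0 1)) {ε : ℝ} (hε : 0 < ε)
    {j : ℕ} (hj : j < nCols ε) :
    h '' col ε j = Set.Icc (sInf (h '' col ε j)) (sSup (h '' col ε j)) :=
  ContinuousOn.image_Icc (col_lo_le_hi hε hj) (hh.mono (col_subset hε j))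

lemma oscCol_nonneg {h : ℝ → ℝ} (hh : ContinuousOn h (Set.Icc 0 1)) {ε : ℝ} (hε : 0 < ε)
    {j : ℕ} (hj : j < nCols ε) : 0 ≤ oscCol h ε j := by
  have hne : (h '' col ε j).Nonempty :=
    (Set.nonempty_Icc.mpr (col_lo_le_hi hε hj)).image h
  rw [image_col_eq hh hε hj] at hne
  have := Set.nonempty_Icc.mp hne
  unfold oscCol; linarith

lemma covNum_graph_le {h : ℝ → ℝ} (hh : ContinuousOn h (Set.Icc 0 1)) {ε : ℝ} (hε : 0 < ε) :
    (covNum (graphOver h (Set.Icc 0 1)) ε : ℝ)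
      ≤ ∑ j ∈ Finset.range (nCols ε), (oscCol h ε j / (2 * ε) + 1) := by
  classical
  set M := nCols ε
  have h2ε : (0:ℝ) < 2 * ε := by linarith
  set m : ℕ → ℕ := fun j => ⌊oscCol h ε j / (2 * ε)⌋₊ with hm
  set ctr : (Σ _ : ℕ, ℕ) → ℝ × ℝ :=
    fun p => (2 * ε * p.1 + ε, sInf (h '' col ε p.1) + ε + 2 * ε * p.2) with hctr
  set S : Finset (Σ _ : ℕ, ℕ) :=
    (Finset.range M).sigma (fun j => Finset.range (m j + 1)) with hS
  have hcov : graphOver h (Set.Icc 0 1) ⊆ ⋃ x ∈ S.image ctr, Metric.closedBall x ε := by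
    rintro - ⟨t, ht, rfl⟩
    obtain ⟨j, hj, htj⟩ := col_cover hε ht
    have hmem : h t ∈ Set.Icc (sInf (h '' col ε j)) (sSup (h '' col ε j)) := by
      rw [← image_col_eq hh hε hj]; exact ⟨t, htj, rfl⟩
    set a := sInf (h '' col ε j) with ha
    have hnn : 0 ≤ (h t - a) / (2 * ε) := div_nonneg (by linarith [hmem.1]) h2ε.le
    set k := ⌊(h t - a) / (2 * ε)⌋₊ with hk
    have hkm : k ≤ m j := by
      apply Nat.floor_le_floor
      have hub : h t - a ≤ oscCol h ε j := by unfold oscCol; rw [← ha]; linarith [hmem.2]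
      exact div_le_div_of_nonneg_right hub h2ε.le
    have hfl : (k:ℝ) ≤ (h t - a)/(2*ε) := Nat.floor_le hnn
    have hfl2 : (h t - a)/(2*ε) < (k:ℝ) + 1 := Nat.lt_floor_add_one _
    have hx1 : 2*ε*(k:ℝ) ≤ h t - a := by
      have := (le_div_iff₀ h2ε).mp hfl; linarith
    have hx2 : h t - a < 2*ε*(k:ℝ) + 2*ε := by
      have := (div_lt_iff₀ h2ε).mp hfl2; nlinarith
    refine Set.mem_iUnion₂.mpr ⟨ctr ⟨j, k⟩, ?_, ?_⟩
    · exact Finset.mem_image_of_mem ctr (Finset.mem_sigma.mpr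
        ⟨Finset.mem_range.mpr hj, Finset.mem_range.mpr (Nat.lt_succ_of_le hkm)⟩)
    · rw [Metric.mem_closedBall, Prod.dist_eq, max_le_iff]
      have h1 : colLo ε j ≤ t := htj.1
      have h2 : t ≤ colHi ε j := htj.2
      have h3 : colHi ε j ≤ 2*ε*((j:ℝ)+1) := by
        unfold colHi; exact_mod_cast min_le_left _ _
      unfold colLo at h1
      constructor
      · rw [Real.dist_eq, abs_le]
        constructor
        · simp only [hctr]; push_cast; linarith
        · simp only [hctr]; push_cast; linarith
      · rw [Real.dist_eq, abs_le]
        constructor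
        · simp only [hctr]; push_cast; linarith
        · simp only [hctr]; push_cast; linarith
  calc (covNum (graphOver h (Set.Icc 0 1)) ε : ℝ)
      ≤ ((S.image ctr).card : ℝ) := by exact_mod_cast covNum_le hcov
    _ ≤ (S.card : ℝ) := by exact_mod_cast Finset.card_image_le
    _ = ∑ j ∈ Finset.range M, ((m j : ℝ) + 1) := by
        rw [hS, Finset.card_sigma]
        push_cast [Finset.card_range]
        rfl
    _ ≤ ∑ j ∈ Finset.range M, (oscCol h ε j/(2*ε) + 1) := by
        apply Finset.sum_le_sum; intro j hjm
        have := Nat.floor_le (div_nonneg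
          (oscCol_nonneg hh hε (Finset.mem_range.mp hjm)) h2ε.le)
        simp only [hm]
        linarith [this]

lemma sum_osc_le {h : ℝ → ℝ} (hh : ContinuousOn h (Set.Icc 0 1)) {ε : ℝ} (hε : 0 < ε)
    {s : Finset (ℝ × ℝ)}
    (hcov : graphOver h (Set.Icc 0 1) ⊆ ⋃ x ∈ s, Metric.closedBall x ε) :
    ∑ j ∈ Finset.range (nCols ε), oscCol h ε j ≤ 6 * ε * s.card := by
  classical
  have h2ε : (0:ℝ) < 2 * ε := by linarith
  set M := nCols ε
  set P : ℕ → ℝ × ℝ → Prop := fun j x => ∃ t ∈ col ε j, (t, h t) ∈ Metric.closedBall x ε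
    with hP
  -- Step 1: oscillation of column j is at most 2ε times the number of balls meeting column j
  have step1 : ∀ j < M, oscCol h ε j ≤ 2 * ε * (s.filter (P j)).card := by
    intro j hj
    set a := sInf (h '' col ε j)
    set b := sSup (h '' col ε j)
    have hsub : Set.Icc a b ⊆ ⋃ x ∈ s.filter (P j), Set.Icc (x.2 - ε) (x.2 + ε) := by
      intro y hy
      rw [← image_col_eq hh hε hj] at hy
      obtain ⟨t, htj, rfl⟩ := hy
      have hgr : (t, h t) ∈ graphOver h (Set.Icc 0 1) := ⟨t, col_subset hε j htj, rfl⟩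
      obtain ⟨x, hx, hdist⟩ := Set.mem_iUnion₂.mp (hcov hgr)
      refine Set.mem_iUnion₂.mpr ⟨x, Finset.mem_filter.mpr ⟨hx, t, htj, hdist⟩, ?_⟩
      rw [Metric.mem_closedBall, Prod.dist_eq, max_le_iff] at hdist
      have hd2 : |h t - x.2| ≤ ε := by
        have := hdist.2; rwa [Real.dist_eq] at this
      have := abs_le.mp hd2
      constructor <;> [linarith [this.2]; linarith [this.1]]
    have hvol : MeasureTheory.volume (Set.Icc a b)
        ≤ ∑ x ∈ s.filter (P j), MeasureTheory.volume (Set.Icc (x.2 - ε) (x.2 + ε)) :=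
      le_trans (MeasureTheory.measure_mono hsub) (MeasureTheory.measure_biUnion_finset_le _ _)
    simp only [Real.volume_Icc] at hvol
    have heq : ∀ x ∈ s.filter (P j), ENNReal.ofReal (x.2 + ε - (x.2 - ε))
        = ENNReal.ofReal (2*ε) := by intro x _; norm_num [two_mul]
    rw [Finset.sum_congr rfl heq, Finset.sum_const, nsmul_eq_mul] at hvol
    have : ENNReal.ofReal (b - a) ≤ ENNReal.ofReal ((s.filter (P j)).card * (2*ε)) := by
      rwa [ENNReal.ofReal_mul (by positivity), ENNReal.ofReal_natCast]
    have := (ENNReal.ofReal_le_ofReal_iff (by positivity)).mp this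
    unfold oscCol
    calc sSup (h '' col ε j) - sInf (h '' col ε j) = b - a := rfl
      _ ≤ (s.filter (P j)).card * (2*ε) := this
      _ = 2 * ε * (s.filter (P j)).card := by ring
  -- Step 2: each ball meets at most 3 columns
  have step2 : ∑ j ∈ Finset.range M, (s.filter (P j)).card ≤ 3 * s.card := by
    have hswap : ∑ j ∈ Finset.range M, (s.filter (P j)).card
        = ∑ x ∈ s, ((Finset.range M).filter (fun j => P j x)).card := by
      simp only [Finset.card_filter]
      rw [Finset.sum_comm]
    rw [hswap]
    calc ∑ x ∈ s, ((Finset.range M).filter (fun j => P j x)).card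
        ≤ ∑ x ∈ s, 3 := by
          apply Finset.sum_le_sum
          intro x hx
          set T := (Finset.range M).filter (fun j => P j x) with hT
          rcases T.eq_empty_or_nonempty with he | hne
          · simp [he]
          · set j₀ := T.min' hne with hj₀
            have hkey : ∀ j ∈ T, x.1 - 3*ε ≤ 2*ε*j ∧ 2*ε*(j:ℝ) ≤ x.1 + ε := by
              intro j hjT
              obtain ⟨-, t, htj, hdist⟩ := Finset.mem_filter.mp hjT
              rw [Metric.mem_closedBall, Prod.dist_eq, max_le_iff] at hdist
              have hd1 : |t - x.1| ≤ ε := by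
                have := hdist.1; rwa [Real.dist_eq] at this
              have h1 := abs_le.mp hd1
              have hlo : 2*ε*(j:ℝ) ≤ t := htj.1
              have hhi : t ≤ 2*ε*((j:ℝ)+1) := by
                refine le_trans htj.2 ?_
                unfold colHi; exact min_le_left _ _
              constructor <;> [linarith [h1.1]; linarith [h1.2]]
            have hsub2 : T ⊆ Finset.Icc j₀ (j₀ + 2) := by
              intro j hjT
              rw [Finset.mem_Icc]
              refine ⟨T.min'_le j hjT, ?_⟩
              have hj := hkey j hjT
              have hj0 := hkey j₀ (T.min'_mem hne)
              have : 2*ε*(j:ℝ) ≤ 2*ε*((j₀:ℝ)+2) := by linarith [hj.2, hj0.1]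
              have hjr : (j:ℝ) ≤ (j₀:ℝ) + 2 := by nlinarith
              exact_mod_cast hjr
            calc T.card ≤ (Finset.Icc j₀ (j₀+2)).card := Finset.card_le_card hsub2
              _ = 3 := by rw [Nat.card_Icc]; omega
      _ = 3 * s.card := by rw [Finset.sum_const]; ring
  -- combine
  calc ∑ j ∈ Finset.range M, oscCol h ε j
      ≤ ∑ j ∈ Finset.range M, 2 * ε * (s.filter (P j)).card := by
        apply Finset.sum_le_sum
        intro j hj
        exact step1 j (Finset.mem_range.mp hj)
    _ = 2 * ε * ∑ j ∈ Finset.range M, ((s.filter (P j)).card : ℝ) := by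
        rw [Finset.mul_sum]
    _ ≤ 2 * ε * (3 * s.card) := by
        have : (∑ j ∈ Finset.range M, ((s.filter (P j)).card:ℝ)) ≤ 3 * s.card := by
          exact_mod_cast step2
        nlinarith
    _ = 6 * ε * s.card := by ring

lemma graph_compact {h : ℝ → ℝ} (hh : ContinuousOn h (Set.Icc 0 1)) :
    IsCompact (graphOver h (Set.Icc 0 1)) :=
  isCompact_Icc.image_of_continuousOn (continuousOn_id.prodMk hh)

lemma graph_nonempty (h : ℝ → ℝ) : (graphOver h (Set.Icc 0 1)).Nonempty :=
  ⟨(0, h 0), 0, ⟨le_rfl, zero_le_one⟩, rfl⟩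

lemma col_compact (ε : ℝ) (j : ℕ) : IsCompact (col ε j) := isCompact_Icc

lemma oscCol_add_le {f g : ℝ → ℝ} (hf : ContinuousOn f (Set.Icc 0 1))
    (hg : ContinuousOn g (Set.Icc 0 1)) {ε : ℝ} (hε : 0 < ε) {j : ℕ} (hj : j < nCols ε) :
    oscCol (f + g) ε j ≤ oscCol f ε j + oscCol g ε j := by
  have hJne : (col ε j).Nonempty := Set.nonempty_Icc.mpr (col_lo_le_hi hε hj)
  have hcf : IsCompact (f '' col ε j) :=
    (col_compact ε j).image_of_continuousOn (hf.mono (col_subset hε j))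
  have hcg : IsCompact (g '' col ε j) :=
    (col_compact ε j).image_of_continuousOn (hg.mono (col_subset hε j))
  have hbf := hcf.bddAbove
  have hbg := hcg.bddAbove
  have hbf' := hcf.bddBelow
  have hbg' := hcg.bddBelow
  have hsup : sSup ((f + g) '' col ε j) ≤ sSup (f '' col ε j) + sSup (g '' col ε j) := by
    apply csSup_le (hJne.image _)
    rintro y ⟨t, ht, rfl⟩
    exact add_le_add (le_csSup hbf ⟨t, ht, rfl⟩) (le_csSup hbg ⟨t, ht, rfl⟩)
  have hinf : sInf (f '' col ε j) + sInf (g '' col ε j) ≤ sInf ((f + g) '' col ε j) := by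
    apply le_csInf (hJne.image _)
    rintro y ⟨t, ht, rfl⟩
    exact add_le_add (csInf_le hbf' ⟨t, ht, rfl⟩) (csInf_le hbg' ⟨t, ht, rfl⟩)
  unfold oscCol
  linarith

lemma one_le_two_eps_card {h : ℝ → ℝ} {ε : ℝ} (hε : 0 < ε) {s : Finset (ℝ × ℝ)}
    (hcov : graphOver h (Set.Icc 0 1) ⊆ ⋃ x ∈ s, Metric.closedBall x ε) :
    1 ≤ 2 * ε * s.card := by
  classical
  have hsub : Set.Icc (0:ℝ) 1 ⊆ ⋃ x ∈ s, Set.Icc (x.1 - ε) (x.1 + ε) := by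
    intro t ht
    obtain ⟨x, hx, hdist⟩ := Set.mem_iUnion₂.mp (hcov ⟨t, ht, rfl⟩)
    rw [Metric.mem_closedBall, Prod.dist_eq, max_le_iff] at hdist
    have hd1 : |t - x.1| ≤ ε := by have := hdist.1; rwa [Real.dist_eq] at this
    have := abs_le.mp hd1
    exact Set.mem_iUnion₂.mpr ⟨x, hx, by constructor <;> [linarith [this.2]; linarith [this.1]]⟩
  have hvol : MeasureTheory.volume (Set.Icc (0:ℝ) 1)
      ≤ ∑ x ∈ s, MeasureTheory.volume (Set.Icc (x.1 - ε) (x.1 + ε)) :=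
    le_trans (MeasureTheory.measure_mono hsub) (MeasureTheory.measure_biUnion_finset_le _ _)
  simp only [Real.volume_Icc] at hvol
  have heq : ∀ x ∈ s, ENNReal.ofReal (x.1 + ε - (x.1 - ε)) = ENNReal.ofReal (2*ε) := by
    intro x _; norm_num [two_mul]
  rw [Finset.sum_congr rfl heq, Finset.sum_const, nsmul_eq_mul] at hvol
  have h1 : ENNReal.ofReal ((1:ℝ) - 0) ≤ ENNReal.ofReal (s.card * (2*ε)) := by
    rwa [ENNReal.ofReal_mul (by positivity), ENNReal.ofReal_natCast]
  have := (ENNReal.ofReal_le_ofReal_iff (by positivity)).mp h1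
  linarith

lemma nCols_le {h : ℝ → ℝ} (hh : ContinuousOn h (Set.Icc 0 1)) {ε : ℝ} (hε : 0 < ε) :
    (nCols ε : ℝ) ≤ 2 * (covNum (graphOver h (Set.Icc 0 1)) ε : ℝ) := by
  obtain ⟨s, hcard, hcov⟩ := exists_covNum (graph_compact hh) hε
  have h1 : 1 ≤ 2 * ε * s.card := one_le_two_eps_card hε hcov
  have h2 : (1:ℕ) ≤ covNum (graphOver h (Set.Icc 0 1)) ε :=
    one_le_covNum (graph_compact hh) (graph_nonempty h) hε
  have h2' : (1:ℝ) ≤ (covNum (graphOver h (Set.Icc 0 1)) ε : ℝ) := by exact_mod_cast h2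
  have hceil : (nCols ε : ℝ) < 1/(2*ε) + 1 := Nat.ceil_lt_add_one (by positivity)
  have hN : (s.card : ℝ) = (covNum (graphOver h (Set.Icc 0 1)) ε : ℝ) := by exact_mod_cast hcard
  have hdiv : 1/(2*ε) ≤ (s.card : ℝ) := by
    rw [div_le_iff₀ (by linarith : (0:ℝ) < 2*ε)]
    linarith [h1]
  rw [hN] at hdiv
  linarith

lemma key_count {f g : ℝ → ℝ} (hf : ContinuousOn f (Set.Icc 0 1))
    (hg : ContinuousOn g (Set.Icc 0 1)) {ε : ℝ} (hε : 0 < ε) :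
    (covNum (graphOver (f + g) (Set.Icc 0 1)) ε : ℝ)
      ≤ 8 * max (covNum (graphOver f (Set.Icc 0 1)) ε : ℝ)
          (covNum (graphOver g (Set.Icc 0 1)) ε : ℝ) := by
  set Nf : ℝ := (covNum (graphOver f (Set.Icc 0 1)) ε : ℝ) with hNf
  set Ng : ℝ := (covNum (graphOver g (Set.Icc 0 1)) ε : ℝ) with hNg
  obtain ⟨sf, hsfc, hsfcov⟩ := exists_covNum (graph_compact hf) hε
  obtain ⟨sg, hsgc, hsgcov⟩ := exists_covNum (graph_compact hg) hε
  have hsf : (sf.card : ℝ) = Nf := by rw [hNf]; exact_mod_cast hsfc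
  have hsg : (sg.card : ℝ) = Ng := by rw [hNg]; exact_mod_cast hsgc
  have h2ε : (0:ℝ) < 2 * ε := by linarith
  have hU := covNum_graph_le (hf.add hg) hε
  have hsum : ∑ j ∈ Finset.range (nCols ε), (oscCol (f+g) ε j / (2 * ε) + 1)
      = (∑ j ∈ Finset.range (nCols ε), oscCol (f+g) ε j) / (2*ε) + (nCols ε : ℝ) := by
    rw [Finset.sum_add_distrib, Finset.sum_const, Finset.card_range, nsmul_eq_mul,
      mul_one, Finset.sum_div]
  have hoscadd : ∑ j ∈ Finset.range (nCols ε), oscCol (f+g) ε j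
      ≤ (∑ j ∈ Finset.range (nCols ε), oscCol f ε j)
        + ∑ j ∈ Finset.range (nCols ε), oscCol g ε j := by
    rw [← Finset.sum_add_distrib]
    exact Finset.sum_le_sum fun j hj =>
      oscCol_add_le hf hg hε (Finset.mem_range.mp hj)
  have hof := sum_osc_le hf hε hsfcov
  have hog := sum_osc_le hg hε hsgcov
  have hM := nCols_le hf hε
  have h1le : (1:ℝ) ≤ Nf := by
    rw [hNf]
    exact_mod_cast one_le_covNum (graph_compact hf) (graph_nonempty f) hε
  have h1leg : (1:ℝ) ≤ Ng := by
    rw [hNg]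
    exact_mod_cast one_le_covNum (graph_compact hg) (graph_nonempty g) hε
  rw [hsf] at hof
  rw [hsg] at hog
  have hdivle : (∑ j ∈ Finset.range (nCols ε), oscCol (f+g) ε j) / (2*ε)
      ≤ 3 * Nf + 3 * Ng := by
    rw [div_le_iff₀ h2ε]
    calc ∑ j ∈ Finset.range (nCols ε), oscCol (f+g) ε j
        ≤ 6 * ε * Nf + 6 * ε * Ng := by linarith
      _ = (3 * Nf + 3 * Ng) * (2*ε) := by ring
  have hmain : (covNum (graphOver (f + g) (Set.Icc 0 1)) ε : ℝ) ≤ 5 * Nf + 3 * Ng := by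
    calc (covNum (graphOver (f + g) (Set.Icc 0 1)) ε : ℝ)
        ≤ (∑ j ∈ Finset.range (nCols ε), oscCol (f+g) ε j) / (2*ε) + (nCols ε : ℝ) := by
          rw [← hsum]; exact hU
      _ ≤ (3 * Nf + 3 * Ng) + 2 * Nf := by linarith
      _ = 5 * Nf + 3 * Ng := by ring
  calc (covNum (graphOver (f + g) (Set.Icc 0 1)) ε : ℝ) ≤ 5 * Nf + 3 * Ng := hmain
    _ ≤ 5 * max Nf Ng + 3 * max Nf Ng := by
        have := le_max_left Nf Ng
        have := le_max_right Nf Ng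
        nlinarith
    _ = 8 * max Nf Ng := by ring

lemma covNum_graph_upper {h : ℝ → ℝ} (hh : ContinuousOn h (Set.Icc 0 1)) {C ε : ℝ}
    (hC : ∀ t ∈ Set.Icc (0:ℝ) 1, |h t| ≤ C) (hε : 0 < ε) (hε2 : ε ≤ 1/2) :
    (covNum (graphOver h (Set.Icc 0 1)) ε : ℝ) ≤ (C + 1) / ε^2 := by
  have hC0 : 0 ≤ C := le_trans (abs_nonneg _) (hC 0 ⟨le_rfl, zero_le_one⟩)
  have h2ε : (0:ℝ) < 2*ε := by linarith
  have hosc : ∀ j < nCols ε, oscCol h ε j ≤ 2*C := by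
    intro j hj
    have hJne : (col ε j).Nonempty := Set.nonempty_Icc.mpr (col_lo_le_hi hε hj)
    have h1 : sSup (h '' col ε j) ≤ C := by
      apply csSup_le (hJne.image _)
      rintro y ⟨t, ht, rfl⟩
      exact (abs_le.mp (hC t (col_subset hε j ht))).2
    have h2 : -C ≤ sInf (h '' col ε j) := by
      apply le_csInf (hJne.image _)
      rintro y ⟨t, ht, rfl⟩
      exact (abs_le.mp (hC t (col_subset hε j ht))).1
    unfold oscCol; linarith
  have hM : (nCols ε : ℝ) ≤ 1/ε := by
    have hceil : (nCols ε : ℝ) < 1/(2*ε) + 1 := Nat.ceil_lt_add_one (by positivity)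
    have : (1:ℝ) ≤ 1/(2*ε) := by
      rw [le_div_iff₀ h2ε]; linarith
    calc (nCols ε : ℝ) ≤ 1/(2*ε) + 1/(2*ε) := by linarith
      _ = 1/ε := by rw [← add_div, eq_div_iff (ne_of_gt hε)]; field_simp; norm_num
  calc (covNum (graphOver h (Set.Icc 0 1)) ε : ℝ)
      ≤ ∑ j ∈ Finset.range (nCols ε), (oscCol h ε j / (2 * ε) + 1) :=
        covNum_graph_le hh hε
    _ ≤ ∑ _j ∈ Finset.range (nCols ε), (C/ε + 1) := by
        apply Finset.sum_le_sum
        intro j hj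
        have := hosc j (Finset.mem_range.mp hj)
        have hd : oscCol h ε j / (2*ε) ≤ 2*C/(2*ε) := div_le_div_of_nonneg_right this h2ε.le
        have : 2*C/(2*ε) = C/ε := by field_simp
        linarith [hd, this.le]
    _ = (nCols ε : ℝ) * (C/ε + 1) := by
        rw [Finset.sum_const, Finset.card_range, nsmul_eq_mul]
    _ ≤ (1/ε) * ((C+1)/ε) := by
        have hc1 : C/ε + 1 ≤ (C+1)/ε := by
          rw [div_add' _ _ _ (ne_of_gt hε)]
          apply div_le_div_of_nonneg_right _ hε.le
          linarith
        have hM0 : (0:ℝ) ≤ (nCols ε : ℝ) := Nat.cast_nonneg _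
        have h1ε : (0:ℝ) ≤ 1/ε := by positivity
        have hCε : (0:ℝ) ≤ C/ε + 1 := by positivity
        nlinarith
    _ = (C + 1) / ε^2 := by rw [div_mul_div_comm, one_mul, ← pow_two]

lemma log_max_eq {a b : ℝ} (ha : 1 ≤ a) (hb : 1 ≤ b) :
    Real.log (max a b) = max (Real.log a) (Real.log b) := by
  rcases le_total a b with h | h
  · rw [max_eq_right h, max_eq_right (Real.log_le_log (by linarith) h)]
  · rw [max_eq_left h, max_eq_left (Real.log_le_log (by linarith) h)]

lemma tendsto_L : Tendsto (fun ε : ℝ => Real.log (1/ε)) (𝓝[>] (0:ℝ)) atTop := by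
  have h1 : Tendsto (fun ε : ℝ => 1/ε) (𝓝[>] (0:ℝ)) atTop := by
    simpa [one_div] using tendsto_inv_nhdsGT_zero (𝕜 := ℝ)
  exact Real.tendsto_log_atTop.comp h1

lemma endgame {u v w : ℝ → ℝ}
    (hL0 : Tendsto (fun ε : ℝ => Real.log 8 / Real.log (1/ε)) (𝓝[>] (0:ℝ)) (𝓝 0))
    (huv : ∀ᶠ ε in 𝓝[>] (0:ℝ), w ε ≤ Real.log 8 / Real.log (1/ε) + max (u ε) (v ε))
    (hu3 : ∀ᶠ ε in 𝓝[>] (0:ℝ), u ε ≤ 3)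
    (hv3 : ∀ᶠ ε in 𝓝[>] (0:ℝ), v ε ≤ 3)
    (hv0 : ∀ᶠ ε in 𝓝[>] (0:ℝ), 0 ≤ v ε)
    (hw0 : ∀ᶠ ε in 𝓝[>] (0:ℝ), 0 ≤ w ε) :
    liminf w (𝓝[>] (0:ℝ)) ≤ max (limsup u (𝓝[>] (0:ℝ))) (liminf v (𝓝[>] (0:ℝ))) := by
  set F := 𝓝[>] (0:ℝ) with hF
  set R := max (limsup u F) (liminf v F) with hR
  by_contra hcon
  push_neg at hcon
  set δ := (liminf w F - R)/3 with hδ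
  have hδ0 : 0 < δ := by rw [hδ]; linarith
  have hbu : F.IsBoundedUnder (· ≤ ·) u := ⟨3, eventually_map.mpr hu3⟩
  have e1 : ∀ᶠ ε in F, u ε < R + δ :=
    eventually_lt_of_limsup_lt (lt_of_le_of_lt (le_max_left _ _) (by linarith)) hbu
  have hcb : F.IsCoboundedUnder (· ≥ ·) v :=
    Filter.IsBoundedUnder.isCoboundedUnder_ge ⟨3, eventually_map.mpr hv3⟩
  have e2 : ∃ᶠ ε in F, v ε < R + δ :=
    frequently_lt_of_liminf_lt hcb (lt_of_le_of_lt (le_max_right _ _) (by linarith))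
  have e3 : ∀ᶠ ε in F, Real.log 8 / Real.log (1/ε) < δ := hL0.eventually (gt_mem_nhds hδ0)
  have freq : ∃ᶠ ε in F, w ε ≤ R + 2*δ := by
    apply (e2.and_eventually (e1.and (e3.and huv))).mono
    rintro ε ⟨h2, h1, h3, h4⟩
    have hmax : max (u ε) (v ε) ≤ R + δ := max_le h1.le h2.le
    linarith
  have hle : liminf w F ≤ R + 2*δ :=
    liminf_le_of_frequently_le freq ⟨0, eventually_map.mpr hw0⟩
  have heq : liminf w F = R + 3*δ := by rw [hδ]; ring
  linarith

theorem stmt8 (f g : ℝ → ℝ)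
    (hf : ContinuousOn f (Set.Icc 0 1)) (hg : ContinuousOn g (Set.Icc 0 1))
    (hex : udim (graphOver f (Set.Icc 0 1)) = ldim (graphOver f (Set.Icc 0 1))) :
    ldim (graphOver (f + g) (Set.Icc 0 1))
      ≤ max (udim (graphOver f (Set.Icc 0 1))) (ldim (graphOver g (Set.Icc 0 1))) := by
  classical
  obtain ⟨Cf, hCf⟩ := isCompact_Icc.exists_bound_of_continuousOn hf
  obtain ⟨Cg, hCg⟩ := isCompact_Icc.exists_bound_of_continuousOn hg
  have hCf' : ∀ t ∈ Set.Icc (0:ℝ) 1, |f t| ≤ Cf := by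
    intro t ht; have := hCf t ht; rwa [Real.norm_eq_abs] at this
  have hCg' : ∀ t ∈ Set.Icc (0:ℝ) 1, |g t| ≤ Cg := by
    intro t ht; have := hCg t ht; rwa [Real.norm_eq_abs] at this
  have hfg : ContinuousOn (f + g) (Set.Icc 0 1) := hf.add hg
  -- the three integrand functions
  set u : ℝ → ℝ :=
    fun ε => Real.log (covNum (graphOver f (Set.Icc 0 1)) ε) / Real.log (1/ε) with hu
  set v : ℝ → ℝ :=
    fun ε => Real.log (covNum (graphOver g (Set.Icc 0 1)) ε) / Real.log (1/ε) with hv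
  set w : ℝ → ℝ :=
    fun ε => Real.log (covNum (graphOver (f + g) (Set.Icc 0 1)) ε) / Real.log (1/ε) with hw
  have hL0 : Tendsto (fun ε : ℝ => Real.log 8 / Real.log (1/ε)) (𝓝[>] (0:ℝ)) (𝓝 0) :=
    tendsto_const_nhds.div_atTop tendsto_L
  have hsmall : ∀ᶠ ε in 𝓝[>] (0:ℝ), 0 < ε ∧ ε < 1/2 := by
    filter_upwards [Ioo_mem_nhdsGT (by norm_num : (0:ℝ) < 1/2)] with ε hε
    exact ⟨hε.1, hε.2⟩
  -- generic bound lemma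
  have bound3 : ∀ (h : ℝ → ℝ) (C : ℝ), ContinuousOn h (Set.Icc 0 1) →
      (∀ t ∈ Set.Icc (0:ℝ) 1, |h t| ≤ C) →
      ∀ᶠ ε in 𝓝[>] (0:ℝ),
        Real.log (covNum (graphOver h (Set.Icc 0 1)) ε) / Real.log (1/ε) ≤ 3 := by
    intro h C hh hC
    filter_upwards [hsmall, tendsto_L.eventually_ge_atTop (max 1 (Real.log (C+1)))]
      with ε hε hLε
    have hε0 : 0 < ε := hε.1
    have hL1 : (1:ℝ) ≤ Real.log (1/ε) := le_trans (le_max_left _ _) hLε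
    have hLpos : (0:ℝ) < Real.log (1/ε) := by linarith
    have hC0 : 0 ≤ C := le_trans (abs_nonneg _) (hC 0 ⟨le_rfl, zero_le_one⟩)
    have hN1 : (1:ℝ) ≤ (covNum (graphOver h (Set.Icc 0 1)) ε : ℝ) := by
      exact_mod_cast one_le_covNum (graph_compact hh) (graph_nonempty h) hε0
    have hNle : (covNum (graphOver h (Set.Icc 0 1)) ε : ℝ) ≤ (C+1)/ε^2 :=
      covNum_graph_upper hh hC hε0 hε.2.le
    have hlog : Real.log (covNum (graphOver h (Set.Icc 0 1)) ε)
        ≤ Real.log (C+1) + 2 * Real.log (1/ε) := by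
      have h1 := Real.log_le_log (by linarith) hNle
      rw [Real.log_div (by linarith) (by positivity), Real.log_pow] at h1
      have h2 : Real.log (1/ε) = - Real.log ε := by
        rw [one_div, Real.log_inv]
      push_cast at h1
      linarith [h1]
    calc Real.log (covNum (graphOver h (Set.Icc 0 1)) ε) / Real.log (1/ε)
        ≤ (Real.log (C+1) + 2 * Real.log (1/ε)) / Real.log (1/ε) :=
          div_le_div_of_nonneg_right hlog hLpos.le
      _ = Real.log (C+1) / Real.log (1/ε) + 2 := by
          rw [add_div, mul_div_assoc, div_self (ne_of_gt hLpos)]; ring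
      _ ≤ 1 + 2 := by
          have : Real.log (C+1) ≤ Real.log (1/ε) := le_trans (le_max_right _ _) hLε
          have := div_le_one_of_le₀ this hLpos.le
          linarith
      _ = 3 := by norm_num
  have bound0 : ∀ (h : ℝ → ℝ), ContinuousOn h (Set.Icc 0 1) →
      ∀ᶠ ε in 𝓝[>] (0:ℝ),
        0 ≤ Real.log (covNum (graphOver h (Set.Icc 0 1)) ε) / Real.log (1/ε) := by
    intro h hh
    filter_upwards [hsmall] with ε hε
    have hN1 : (1:ℝ) ≤ (covNum (graphOver h (Set.Icc 0 1)) ε : ℝ) := by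
      exact_mod_cast one_le_covNum (graph_compact hh) (graph_nonempty h) hε.1
    have hLpos : (0:ℝ) ≤ Real.log (1/ε) := by
      apply Real.log_nonneg
      rw [le_div_iff₀ hε.1]; linarith [hε.2]
    exact div_nonneg (Real.log_nonneg hN1) hLpos
  have hu3 := bound3 f Cf hf hCf'
  have hv3 := bound3 g Cg hg hCg'
  have hv0 := bound0 g hg
  have hw0 := bound0 (f + g) hfg
  have hkey : ∀ᶠ ε in 𝓝[>] (0:ℝ),
      w ε ≤ Real.log 8 / Real.log (1/ε) + max (u ε) (v ε) := by
    filter_upwards [hsmall] with ε hε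
    have hε0 : 0 < ε := hε.1
    have hNf1 : (1:ℝ) ≤ (covNum (graphOver f (Set.Icc 0 1)) ε : ℝ) := by
      exact_mod_cast one_le_covNum (graph_compact hf) (graph_nonempty f) hε0
    have hNg1 : (1:ℝ) ≤ (covNum (graphOver g (Set.Icc 0 1)) ε : ℝ) := by
      exact_mod_cast one_le_covNum (graph_compact hg) (graph_nonempty g) hε0
    have hNw1 : (1:ℝ) ≤ (covNum (graphOver (f+g) (Set.Icc 0 1)) ε : ℝ) := by
      exact_mod_cast one_le_covNum (graph_compact hfg) (graph_nonempty (f+g)) hε0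
    have hLpos : (0:ℝ) < Real.log (1/ε) :=
      Real.log_pos (by rw [lt_div_iff₀ hε0]; linarith [hε.2])
    have hcount := key_count hf hg hε0
    set Nf := (covNum (graphOver f (Set.Icc 0 1)) ε : ℝ) with hNfd
    set Ng := (covNum (graphOver g (Set.Icc 0 1)) ε : ℝ) with hNgd
    set Nw := (covNum (graphOver (f+g) (Set.Icc 0 1)) ε : ℝ) with hNwd
    have hlog1 : Real.log Nw ≤ Real.log (8 * max Nf Ng) := by
      apply Real.log_le_log (by linarith)
      exact hcount
    rw [Real.log_mul (by norm_num) (by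
      have : (1:ℝ) ≤ max Nf Ng := le_trans hNf1 (le_max_left _ _)
      linarith), log_max_eq hNf1 hNg1] at hlog1
    have hdiv := div_le_div_of_nonneg_right hlog1 hLpos.le
    rw [add_div, ← max_div_div_right hLpos.le] at hdiv
    simp only [hu, hv, hw]
    exact hdiv
  show liminf w (𝓝[>] (0:ℝ)) ≤ max (limsup u (𝓝[>] (0:ℝ))) (liminf v (𝓝[>] (0:ℝ)))
  exact endgame hL0 hkey hu3 hv3 hv0 hw0
end

section
/- Let f, g : [0,1] → ℝ be continuous, and assume the Minkowski dimension α of G(f) exists and α < β, where β is the lower Minkowski dimension of G(g). Then the lower Minkowski dimension of the graph of f + g over [0,1] equals β. -/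
open Filter Metric Set
open scoped Topology ENNReal

namespace BoxAux


lemma covNum_le_card {E : Type*} [PseudoMetricSpace E] {A : Set E} {ε : ℝ}
    {s : Finset E} (h : A ⊆ ⋃ x ∈ s, Metric.closedBall x ε) :
    covNum A ε ≤ s.card :=
  Nat.sInf_le ⟨s, rfl, h⟩

lemma exists_min_cover {E : Type*} [PseudoMetricSpace E] {A : Set E} {ε : ℝ}
    (hne : {n : ℕ | ∃ s : Finset E, s.card = n ∧ A ⊆ ⋃ x ∈ s, Metric.closedBall x ε}.Nonempty) :
    ∃ s : Finset E, s.card = covNum A ε ∧ A ⊆ ⋃ x ∈ s, Metric.closedBall x ε :=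
  Nat.sInf_mem hne

lemma covNum_anti {E : Type*} [PseudoMetricSpace E] {A : Set E} {ε ε' : ℝ}
    (hne : {n : ℕ | ∃ s : Finset E, s.card = n ∧ A ⊆ ⋃ x ∈ s, Metric.closedBall x ε}.Nonempty)
    (hεε : ε ≤ ε') : covNum A ε' ≤ covNum A ε := by
  obtain ⟨s, hcard, hcov⟩ := exists_min_cover hne
  rw [← hcard]
  apply covNum_le_card
  refine hcov.trans (Set.iUnion₂_mono fun x _ => Metric.closedBall_subset_closedBall hεε)




/-- dyadic point -/
noncomputable def pt (n k : ℕ) : ℝ := k / 2 ^ n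

lemma pt_le (n k : ℕ) : pt n k ≤ pt n (k+1) := by
  unfold pt
  apply div_le_div_of_nonneg_right ?_ (by positivity)
  exact_mod_cast Nat.le_succ k

/-- dyadic interval -/
def Iv (n k : ℕ) : Set ℝ := Icc (pt n k) (pt n (k+1))

lemma Iv_nonempty (n k : ℕ) : (Iv n k).Nonempty := Set.nonempty_Icc.2 (pt_le n k)

lemma Iv_subset (n k : ℕ) (hk : k < 2 ^ n) : Iv n k ⊆ Icc 0 1 := by
  apply Icc_subset_Icc
  · unfold pt; positivity
  · unfold pt
    rw [div_le_one (by positivity)]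
    exact_mod_cast hk

noncomputable def osc (h : ℝ → ℝ) (n k : ℕ) : ℝ :=
  sSup (h '' Iv n k) - sInf (h '' Iv n k)

noncomputable def Tsum (h : ℝ → ℝ) (n : ℕ) : ℝ :=
  ∑ k ∈ Finset.range (2 ^ n), osc h n k

section osc
variable {h h₁ h₂ : ℝ → ℝ} {n k : ℕ}

lemma image_nonempty (h : ℝ → ℝ) (n k : ℕ) : (h '' Iv n k).Nonempty :=
  (Iv_nonempty n k).image h

lemma bddAbove_image (hc : ContinuousOn h (Icc 0 1)) (hk : k < 2 ^ n) :
    BddAbove (h '' Iv n k) := by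
  have : IsCompact (Iv n k) := isCompact_Icc
  exact (this.image_of_continuousOn (hc.mono (Iv_subset n k hk))).bddAbove

lemma bddBelow_image (hc : ContinuousOn h (Icc 0 1)) (hk : k < 2 ^ n) :
    BddBelow (h '' Iv n k) := by
  have : IsCompact (Iv n k) := isCompact_Icc
  exact (this.image_of_continuousOn (hc.mono (Iv_subset n k hk))).bddBelow

lemma osc_nonneg (hc : ContinuousOn h (Icc 0 1)) (hk : k < 2 ^ n) :
    0 ≤ osc h n k := by
  obtain ⟨y, hy⟩ := image_nonempty h n k
  have h1 := csInf_le (bddBelow_image hc hk) hy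
  have h2 := le_csSup (bddAbove_image hc hk) hy
  unfold osc; linarith

lemma osc_add_le (h1 : ContinuousOn h₁ (Icc 0 1)) (h2 : ContinuousOn h₂ (Icc 0 1))
    (hk : k < 2 ^ n) : osc (h₁ + h₂) n k ≤ osc h₁ n k + osc h₂ n k := by
  have hS : sSup ((h₁ + h₂) '' Iv n k) ≤ sSup (h₁ '' Iv n k) + sSup (h₂ '' Iv n k) := by
    apply csSup_le (image_nonempty _ n k)
    rintro y ⟨t, ht, rfl⟩
    have e1 := le_csSup (bddAbove_image h1 hk) (mem_image_of_mem h₁ ht)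
    have e2 := le_csSup (bddAbove_image h2 hk) (mem_image_of_mem h₂ ht)
    simpa using add_le_add e1 e2
  have hI : sInf (h₁ '' Iv n k) + sInf (h₂ '' Iv n k) ≤ sInf ((h₁ + h₂) '' Iv n k) := by
    apply le_csInf (image_nonempty _ n k)
    rintro y ⟨t, ht, rfl⟩
    have e1 := csInf_le (bddBelow_image h1 hk) (mem_image_of_mem h₁ ht)
    have e2 := csInf_le (bddBelow_image h2 hk) (mem_image_of_mem h₂ ht)
    simpa using add_le_add e1 e2
  unfold osc; linarith

lemma osc_neg (hc : ContinuousOn h (Icc 0 1)) (hk : k < 2 ^ n) :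
    osc (-h) n k = osc h n k := by
  have himg : (-h) '' Iv n k = -(h '' Iv n k) := by
    ext y
    simp only [Set.mem_image, Set.mem_neg, Pi.neg_apply]
    constructor
    · rintro ⟨t, ht, rfl⟩; exact ⟨t, ht, by ring⟩
    · rintro ⟨t, ht, hty⟩; exact ⟨t, ht, by linarith⟩
  unfold osc
  rw [himg, csSup_neg (image_nonempty h n k) (bddBelow_image hc hk),
    csInf_neg (image_nonempty h n k) (bddAbove_image hc hk)]
  ring

lemma osc_sub_le (h1 : ContinuousOn h₁ (Icc 0 1)) (h2 : ContinuousOn h₂ (Icc 0 1))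
    (hk : k < 2 ^ n) : osc h₂ n k - osc h₁ n k ≤ osc (h₁ + h₂) n k := by
  have : osc h₂ n k ≤ osc (h₁ + h₂) n k + osc h₁ n k := by
    have e : h₂ = (h₁ + h₂) + (-h₁) := by ext t; simp
    calc osc h₂ n k = osc ((h₁ + h₂) + (-h₁)) n k := by rw [← e]
    _ ≤ osc (h₁ + h₂) n k + osc (-h₁) n k :=
        osc_add_le (h1.add h2) (h1.neg) hk
    _ = osc (h₁ + h₂) n k + osc h₁ n k := by rw [osc_neg h1 hk]
  linarith

end osc



lemma pt_add_one (n k : ℕ) : pt n (k+1) = pt n k + (2 ^ n : ℝ)⁻¹ := by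
  unfold pt
  push_cast
  field_simp

noncomputable def Jnum (h : ℝ → ℝ) (n k : ℕ) : ℕ := ⌈2 ^ n * osc h n k / 2⌉₊

noncomputable def ctr (h : ℝ → ℝ) (n : ℕ) (p : (_ : ℕ) × ℕ) : ℝ × ℝ :=
  (pt n p.1, sInf (h '' Iv n p.1) + (2 * p.2 + 1) * (2 ^ n : ℝ)⁻¹)

noncomputable def coverFs (h : ℝ → ℝ) (n : ℕ) : Finset (ℝ × ℝ) :=
  ((Finset.range (2 ^ n)).sigma (fun k => Finset.range (Jnum h n k + 1))).image (ctr h n)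

lemma cover_covers {h : ℝ → ℝ} (hc : ContinuousOn h (Icc 0 1)) (n : ℕ) :
    graphOver h (Icc 0 1) ⊆ ⋃ x ∈ coverFs h n, Metric.closedBall x ((2 ^ n : ℝ)⁻¹) := by
  rintro _ ⟨t, ht, rfl⟩
  set ε : ℝ := (2 ^ n : ℝ)⁻¹ with hε
  have hεpos : 0 < ε := by positivity
  obtain ⟨ht0, ht1⟩ := ht
  have h2n : (0:ℕ) < 2 ^ n := Nat.pow_pos (by norm_num)
  -- choose k
  set k : ℕ := min ⌊t * 2 ^ n⌋₊ (2 ^ n - 1) with hkdef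
  have hk : k < 2 ^ n := by
    have : k ≤ 2 ^ n - 1 := min_le_right _ _
    omega
  have l : pt n k ≤ t := by
    unfold pt
    rw [div_le_iff₀ (by positivity)]
    calc (k:ℝ) ≤ (⌊t * 2 ^ n⌋₊ : ℝ) := Nat.cast_le.mpr (min_le_left _ _)
    _ ≤ t * 2 ^ n := Nat.floor_le (by positivity)
  have r : t ≤ pt n (k+1) := by
    unfold pt
    rw [le_div_iff₀ (by positivity)]
    rcases le_or_gt (⌊t * 2 ^ n⌋₊) (2 ^ n - 1) with hle | hgt
    · have hk' : k = ⌊t * 2 ^ n⌋₊ := by omega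
      have := Nat.lt_floor_add_one (t * 2 ^ n)
      rw [hk']
      push_cast
      linarith
    · have hk' : k = 2 ^ n - 1 := by omega
      have hcast : ((k:ℝ) + 1) = (2:ℝ) ^ n := by
        have : k + 1 = 2 ^ n := by omega
        exact_mod_cast this
      push_cast
      rw [hcast]
      nlinarith [pow_pos (show (0:ℝ) < 2 by norm_num) n]
  have htIv : t ∈ Iv n k := ⟨l, r⟩
  -- h t between m and M
  set m := sInf (h '' Iv n k) with hm
  have hmle : m ≤ h t := csInf_le (bddBelow_image hc hk) (mem_image_of_mem h htIv)
  have hleM : h t ≤ sSup (h '' Iv n k) := le_csSup (bddAbove_image hc hk) (mem_image_of_mem h htIv)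
  have hosc : h t - m ≤ osc h n k := by unfold osc; rw [← hm]; linarith
  -- choose j
  set j : ℕ := ⌊(h t - m) / (2 * ε)⌋₊ with hjdef
  have hjJ : j ≤ Jnum h n k := by
    have h1 : (h t - m) / (2 * ε) ≤ 2 ^ n * osc h n k / 2 := by
      rw [div_le_div_iff₀ (by positivity) (by norm_num)]
      have hε2 : ε * (2:ℝ)^n = 1 := by rw [hε]; field_simp
      nlinarith
    calc j ≤ ⌊2 ^ n * osc h n k / 2⌋₊ := Nat.floor_le_floor h1
    _ ≤ Jnum h n k := Nat.floor_le_ceil _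
  apply Set.mem_biUnion (show ctr h n ⟨k, j⟩ ∈ coverFs h n from
    Finset.mem_image_of_mem _ (Finset.mem_sigma.2 ⟨Finset.mem_range.2 hk,
      Finset.mem_range.2 (Nat.lt_succ_of_le hjJ)⟩))
  rw [Metric.mem_closedBall, Prod.dist_eq]
  apply max_le
  · rw [Real.dist_eq, abs_le]
    have hpt := pt_add_one n k
    rw [← hε] at hpt
    constructor
    · simp only [ctr]; linarith
    · simp only [ctr]; linarith
  · rw [Real.dist_eq, abs_le]
    have hfl : (j:ℝ) ≤ (h t - m) / (2 * ε) := Nat.floor_le (div_nonneg (by linarith) (by positivity))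
    have hfu : (h t - m) / (2 * ε) < j + 1 := Nat.lt_floor_add_one _
    have e1 : (j:ℝ) * (2 * ε) ≤ h t - m := by
      rw [← le_div_iff₀ (by positivity)]; exact hfl
    have e2 : h t - m < ((j:ℝ) + 1) * (2 * ε) := by
      rw [← div_lt_iff₀ (by positivity)]; exact hfu
    simp only [ctr]
    constructor <;> [nlinarith; nlinarith]

lemma card_coverFs (h : ℝ → ℝ) (hc : ContinuousOn h (Icc 0 1)) (n : ℕ) :
    ((coverFs h n).card : ℝ) ≤ 2 ^ n * Tsum h n + 2 ^ (n + 1) := by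
  have h1 : (coverFs h n).card ≤
      ∑ k ∈ Finset.range (2 ^ n), (Jnum h n k + 1) := by
    refine (Finset.card_image_le).trans ?_
    rw [Finset.card_sigma]
    simp
  have hT : 0 ≤ Tsum h n := Finset.sum_nonneg fun k hk =>
    osc_nonneg hc (Finset.mem_range.1 hk)
  calc ((coverFs h n).card : ℝ) ≤ ∑ k ∈ Finset.range (2 ^ n), ((Jnum h n k : ℝ) + 1) := by
        exact_mod_cast h1
  _ ≤ ∑ k ∈ Finset.range (2 ^ n), (2 ^ n * osc h n k / 2 + 2) := by
      apply Finset.sum_le_sum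
      intro k hk
      have hk' := Finset.mem_range.1 hk
      have hJ : (Jnum h n k : ℝ) < 2 ^ n * osc h n k / 2 + 1 :=
        Nat.ceil_lt_add_one (show (0:ℝ) ≤ 2 ^ n * osc h n k / 2 by
          have := osc_nonneg hc hk'; positivity)
      linarith
  _ = 2 ^ n * Tsum h n / 2 + 2 * 2 ^ n := by
      rw [Finset.sum_add_distrib, Finset.sum_const, Finset.card_range]
      unfold Tsum
      rw [Finset.mul_sum, ← Finset.sum_div]
      push_cast
      ring
  _ ≤ 2 ^ n * Tsum h n + 2 ^ (n + 1) := by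
      have hp : (0:ℝ) ≤ 2 ^ n * Tsum h n := by positivity
      have : (2:ℝ) ^ (n+1) = 2 * 2 ^ n := by ring
      linarith

theorem covNum_le (h : ℝ → ℝ) (hc : ContinuousOn h (Icc 0 1)) (n : ℕ) :
    (covNum (graphOver h (Icc 0 1)) ((2 ^ n : ℝ)⁻¹) : ℝ) ≤ 2 ^ n * Tsum h n + 2 ^ (n + 1) := by
  have := covNum_le_card (cover_covers hc n)
  calc (covNum (graphOver h (Icc 0 1)) ((2 ^ n : ℝ)⁻¹) : ℝ) ≤ ((coverFs h n).card : ℝ) := by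
        exact_mod_cast this
  _ ≤ _ := card_coverFs h hc n




lemma pt_mono (n : ℕ) {a b : ℕ} (hab : a ≤ b) : pt n a ≤ pt n b := by
  unfold pt
  apply div_le_div_of_nonneg_right ?_ (by positivity)
  exact_mod_cast hab

theorem Tsum_le (h : ℝ → ℝ) (hc : ContinuousOn h (Icc 0 1)) (n : ℕ) :
    (2 ^ n : ℝ) * Tsum h n ≤ 8 * covNum (graphOver h (Icc 0 1)) ((2 ^ n : ℝ)⁻¹) := by
  classical
  set ε : ℝ := (2 ^ n : ℝ)⁻¹ with hε
  have hεpos : 0 < ε := by positivity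
  obtain ⟨s₀, hcov₀⟩ : ∃ s : Finset (ℝ × ℝ), graphOver h (Icc 0 1) ⊆ ⋃ x ∈ s, Metric.closedBall x ((2 ^ n : ℝ)⁻¹) := ⟨coverFs h n, cover_covers hc n⟩
  obtain ⟨s, hcard, hcov⟩ := exists_min_cover (ε := ε) ⟨s₀.card, s₀, rfl, hcov₀⟩
  set T : ℕ → Finset (ℝ × ℝ) :=
    fun k => s.filter (fun c => ∃ t ∈ Iv n k, (t, h t) ∈ Metric.closedBall c ε) with hT
  -- Step A
  have stepA : ∀ k < 2 ^ n, osc h n k ≤ (T k).card * (2 * ε) := by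
    intro k hk
    have himg : h '' Iv n k = Icc (sInf (h '' Iv n k)) (sSup (h '' Iv n k)) :=
      ContinuousOn.image_Icc (pt_le n k) (hc.mono (Iv_subset n k hk))
    have hsub : h '' Iv n k ⊆ ⋃ c ∈ T k, Icc (c.2 - ε) (c.2 + ε) := by
      rintro _ ⟨t, ht, rfl⟩
      have htI : t ∈ Icc (0:ℝ) 1 := Iv_subset n k hk ht
      have : (t, h t) ∈ ⋃ x ∈ s, Metric.closedBall x ε := hcov ⟨t, htI, rfl⟩
      obtain ⟨c, hcs, hcball⟩ := Set.mem_iUnion₂.1 this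
      have hcT : c ∈ T k := Finset.mem_filter.2 ⟨hcs, t, ht, hcball⟩
      apply Set.mem_biUnion hcT
      have hd : dist (h t) c.2 ≤ ε := by
        have := Metric.mem_closedBall.1 hcball
        rw [Prod.dist_eq] at this
        exact le_trans (le_max_right _ _) this
      rw [Real.dist_eq, abs_le] at hd
      constructor <;> [linarith [hd.1]; linarith [hd.2]]
    have hvol : MeasureTheory.volume (h '' Iv n k) ≤
        (T k).card * ENNReal.ofReal (2 * ε) := by
      calc MeasureTheory.volume (h '' Iv n k)
          ≤ MeasureTheory.volume (⋃ c ∈ T k, Icc (c.2 - ε) (c.2 + ε)) :=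
            MeasureTheory.measure_mono hsub
      _ ≤ ∑ c ∈ T k, MeasureTheory.volume (Icc (c.2 - ε) (c.2 + ε)) :=
            MeasureTheory.measure_biUnion_finset_le _ _
      _ = ∑ c ∈ T k, ENNReal.ofReal (2 * ε) := by
            apply Finset.sum_congr rfl
            intro c _
            rw [Real.volume_Icc]
            ring_nf
      _ = (T k).card * ENNReal.ofReal (2 * ε) := by
            rw [Finset.sum_const, nsmul_eq_mul]
    rw [himg, Real.volume_Icc] at hvol
    have hosc : osc h n k = sSup (h '' Iv n k) - sInf (h '' Iv n k) := rfl
    rw [← hosc] at hvol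
    have h2 : ((T k).card : ℝ≥0∞) * ENNReal.ofReal (2 * ε) =
        ENNReal.ofReal ((T k).card * (2 * ε)) := by
      rw [ENNReal.ofReal_mul (show (0:ℝ) ≤ ((T k).card : ℝ) from Nat.cast_nonneg _),
        ENNReal.ofReal_natCast]
    rw [h2] at hvol
    have := (ENNReal.ofReal_le_ofReal_iff (mul_nonneg (Nat.cast_nonneg _) (by positivity))).1 hvol
    exact this
  -- Step B : multiplicity
  have stepB : ∑ k ∈ Finset.range (2 ^ n), (T k).card ≤ 4 * s.card := by
    have hswap : ∑ k ∈ Finset.range (2 ^ n), (T k).card =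
        ∑ c ∈ s, ((Finset.range (2 ^ n)).filter
          (fun k => ∃ t ∈ Iv n k, (t, h t) ∈ Metric.closedBall c ε)).card := by
      simp only [hT, Finset.card_filter]
      rw [Finset.sum_comm]
    rw [hswap]
    have hmul : ∀ c ∈ s, ((Finset.range (2 ^ n)).filter
        (fun k => ∃ t ∈ Iv n k, (t, h t) ∈ Metric.closedBall c ε)).card ≤ 4 := by
      intro c _
      set K := (Finset.range (2 ^ n)).filter
        (fun k => ∃ t ∈ Iv n k, (t, h t) ∈ Metric.closedBall c ε) with hK
      rcases K.eq_empty_or_nonempty with he | hne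
      · simp [he]
      · have hwin : ∀ k ∈ K, ∀ k' ∈ K, k' ≤ k + 3 := by
          intro k hkK k' hk'K
          obtain ⟨-, t, htI, htb⟩ := Finset.mem_filter.1 hkK
          obtain ⟨-, t', ht'I, ht'b⟩ := Finset.mem_filter.1 hk'K
          by_contra hcon
          push_neg at hcon
          have hd : dist t c.1 ≤ ε := by
            have := Metric.mem_closedBall.1 htb
            rw [Prod.dist_eq] at this
            exact le_trans (le_max_left _ _) this
          have hd' : dist t' c.1 ≤ ε := by
            have := Metric.mem_closedBall.1 ht'b
            rw [Prod.dist_eq] at this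
            exact le_trans (le_max_left _ _) this
          have htt' : |t - t'| ≤ 2 * ε := by
            rw [Real.dist_eq] at hd hd'
            calc |t - t'| ≤ |t - c.1| + |c.1 - t'| := abs_sub_le _ _ _
            _ ≤ ε + ε := add_le_add hd (by rwa [abs_sub_comm])
            _ = 2 * ε := by ring
          -- k' ≥ k + 4 : t' ≥ pt n k' ≥ pt n (k+4) = pt n (k+1) + 3ε > t + 2ε
          have h1 : pt n (k + 4) ≤ pt n k' := pt_mono n (by omega)
          have h2 : pt n (k + 4) = pt n (k+1) + 3 * ε := by
            rw [show k + 4 = (k+3) + 1 from rfl, pt_add_one n (k+3),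
              show k + 3 = (k+2) + 1 from rfl, pt_add_one n (k+2),
              show k + 2 = (k+1) + 1 from rfl, pt_add_one n (k+1), ← hε]
            ring
          have ht'lb : pt n k' ≤ t' := ht'I.1
          have htub : t ≤ pt n (k+1) := htI.2
          rw [abs_le] at htt'
          have : pt n (k+1) + 3 * ε ≤ t' := by
            calc pt n (k+1) + 3*ε = pt n (k+4) := h2.symm
            _ ≤ pt n k' := h1
            _ ≤ t' := ht'lb
          linarith [htt'.1]
        have hKmin := K.min'_mem hne
        have hsub4 : K ⊆ Finset.Icc (K.min' hne) (K.min' hne + 3) := by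
          intro k hkK
          rw [Finset.mem_Icc]
          exact ⟨K.min'_le k hkK, hwin _ hKmin _ hkK⟩
        calc K.card ≤ (Finset.Icc (K.min' hne) (K.min' hne + 3)).card :=
              Finset.card_le_card hsub4
        _ = 4 := by rw [Nat.card_Icc]; omega
    calc ∑ c ∈ s, _ ≤ ∑ c ∈ s, 4 := Finset.sum_le_sum hmul
    _ = 4 * s.card := by rw [Finset.sum_const, smul_eq_mul]; ring
  -- combine
  have hcomb : Tsum h n ≤ (4 * s.card : ℕ) * (2 * ε) := by
    calc Tsum h n ≤ ∑ k ∈ Finset.range (2 ^ n), ((T k).card * (2 * ε)) := by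
          apply Finset.sum_le_sum
          intro k hk
          exact stepA k (Finset.mem_range.1 hk)
    _ = (∑ k ∈ Finset.range (2 ^ n), ((T k).card : ℝ)) * (2 * ε) := by
          rw [Finset.sum_mul]
    _ ≤ (4 * s.card : ℕ) * (2 * ε) := by
          apply mul_le_mul_of_nonneg_right ?_ (by positivity)
          exact_mod_cast stepB
  have hε2 : (2:ℝ) ^ n * ε = 1 := by rw [hε]; field_simp
  rw [hcard] at hcomb
  calc (2 ^ n : ℝ) * Tsum h n ≤ 2 ^ n * ((4 * covNum (graphOver h (Icc 0 1)) ε : ℕ) * (2 * ε)) := by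
        apply mul_le_mul_of_nonneg_left hcomb (by positivity)
  _ = 8 * covNum (graphOver h (Icc 0 1)) ε := by
        push_cast
        nlinarith [hε2]



/-- for every positive ε there is a finite cover of the graph. -/
lemma coverSet_nonempty {h : ℝ → ℝ} (hc : ContinuousOn h (Icc 0 1)) {ε : ℝ} (hε : 0 < ε) :
    {m : ℕ | ∃ s : Finset (ℝ × ℝ), s.card = m ∧
      graphOver h (Icc 0 1) ⊆ ⋃ x ∈ s, Metric.closedBall x ε}.Nonempty := by
  obtain ⟨n, hn⟩ := pow_unbounded_of_one_lt ε⁻¹ (by norm_num : (1:ℝ) < 2)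
  have hle : (2 ^ n : ℝ)⁻¹ ≤ ε := by
    rw [inv_le_comm₀ (by positivity) hε] at *
    exact le_of_lt hn
  refine ⟨(coverFs h n).card, coverFs h n, rfl, ?_⟩
  refine (cover_covers hc n).trans (Set.iUnion₂_mono fun x _ =>
    Metric.closedBall_subset_closedBall hle)

/-- projection lower bound : 1 ≤ card * 2ε for any cover. -/
lemma card_cover_lower {h : ℝ → ℝ} {ε : ℝ} (hε : 0 < ε) {s : Finset (ℝ × ℝ)}
    (hcov : graphOver h (Icc 0 1) ⊆ ⋃ x ∈ s, Metric.closedBall x ε) :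
    (1:ℝ) ≤ s.card * (2 * ε) := by
  have hsub : Icc (0:ℝ) 1 ⊆ ⋃ c ∈ s, Icc (c.1 - ε) (c.1 + ε) := by
    intro t ht
    have : (t, h t) ∈ ⋃ x ∈ s, Metric.closedBall x ε := hcov ⟨t, ht, rfl⟩
    obtain ⟨c, hcs, hcball⟩ := Set.mem_iUnion₂.1 this
    apply Set.mem_biUnion hcs
    have hd : dist t c.1 ≤ ε := by
      have := Metric.mem_closedBall.1 hcball
      rw [Prod.dist_eq] at this
      exact le_trans (le_max_left _ _) this
    rw [Real.dist_eq, abs_le] at hd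
    exact ⟨by linarith [hd.1], by linarith [hd.2]⟩
  have hvol : MeasureTheory.volume (Icc (0:ℝ) 1) ≤
      ENNReal.ofReal ((s.card : ℝ) * (2 * ε)) := by
    calc MeasureTheory.volume (Icc (0:ℝ) 1)
        ≤ MeasureTheory.volume (⋃ c ∈ s, Icc (c.1 - ε) (c.1 + ε)) :=
          MeasureTheory.measure_mono hsub
    _ ≤ ∑ c ∈ s, MeasureTheory.volume (Icc (c.1 - ε) (c.1 + ε)) :=
          MeasureTheory.measure_biUnion_finset_le _ _
    _ = ∑ c ∈ s, ENNReal.ofReal (2 * ε) := by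
          refine Finset.sum_congr rfl fun c _ => ?_
          rw [Real.volume_Icc]; ring_nf
    _ = (s.card : ℝ≥0∞) * ENNReal.ofReal (2 * ε) := by
          rw [Finset.sum_const, nsmul_eq_mul]
    _ = ENNReal.ofReal ((s.card : ℝ) * (2 * ε)) := by
          rw [ENNReal.ofReal_mul (show (0:ℝ) ≤ (s.card : ℝ) by positivity),
            ENNReal.ofReal_natCast]
  rw [Real.volume_Icc] at hvol
  have := (ENNReal.ofReal_le_ofReal_iff (by positivity)).1 hvol
  linarith

lemma covNum_lower {h : ℝ → ℝ} (hc : ContinuousOn h (Icc 0 1)) {ε : ℝ} (hε : 0 < ε) :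
    (1:ℝ) ≤ (covNum (graphOver h (Icc 0 1)) ε : ℝ) * (2 * ε) := by
  obtain ⟨s, hcard, hcov⟩ := exists_min_cover (coverSet_nonempty hc hε)
  rw [← hcard]
  exact card_cover_lower hε hcov

lemma covNum_pos {h : ℝ → ℝ} (hc : ContinuousOn h (Icc 0 1)) {ε : ℝ} (hε : 0 < ε) :
    1 ≤ covNum (graphOver h (Icc 0 1)) ε := by
  by_contra hcon
  push_neg at hcon
  interval_cases hcn : covNum (graphOver h (Icc 0 1)) ε
  have := covNum_lower hc hε
  rw [hcn] at this
  norm_num at this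

/-- global oscillation bound -/
lemma Tsum_global_bound {h : ℝ → ℝ} (hc : ContinuousOn h (Icc 0 1)) :
    ∃ C : ℝ, 1 ≤ C ∧ ∀ n, Tsum h n ≤ 2 ^ n * C := by
  obtain ⟨M, hM⟩ := (isCompact_Icc.image_of_continuousOn hc).isBounded.subset_closedBall 0
  refine ⟨2 * |M| + 1, by linarith [abs_nonneg M], fun n => ?_⟩
  have hosc : ∀ k < 2 ^ n, osc h n k ≤ 2 * |M| + 1 := by
    intro k hk
    have hb : ∀ y ∈ h '' Iv n k, |y| ≤ |M| := by
      rintro y hy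
      have : y ∈ h '' Icc 0 1 := image_mono (Iv_subset n k hk) hy
      have := hM this
      rw [Metric.mem_closedBall, Real.dist_eq, sub_zero] at this
      exact this.trans (le_abs_self M)
    have h1 : sSup (h '' Iv n k) ≤ |M| :=
      csSup_le (image_nonempty h n k) fun y hy => (abs_le.1 (hb y hy)).2
    have h2 : -|M| ≤ sInf (h '' Iv n k) :=
      le_csInf (image_nonempty h n k) fun y hy => (abs_le.1 (hb y hy)).1
    unfold osc; linarith
  calc Tsum h n ≤ ∑ _k ∈ Finset.range (2 ^ n), (2 * |M| + 1) :=
        Finset.sum_le_sum fun k hk => hosc k (Finset.mem_range.1 hk)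
  _ = 2 ^ n * (2 * |M| + 1) := by
        rw [Finset.sum_const, Finset.card_range, nsmul_eq_mul]
        push_cast
        ring




noncomputable def dy (n : ℕ) : ℝ := (2 ^ n : ℝ)⁻¹
noncomputable def nfun (ε : ℝ) : ℕ := ⌊Real.logb 2 ε⁻¹⌋₊

lemma dy_pos (n : ℕ) : 0 < dy n := by unfold dy; positivity

lemma tendsto_dy : Tendsto dy atTop (𝓝[>] (0:ℝ)) := by
  apply tendsto_nhdsWithin_of_tendsto_nhds_of_eventually_within
  · have : dy = fun n => ((2:ℝ)⁻¹) ^ n := by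
      funext n; unfold dy; rw [inv_pow]
    rw [this]
    exact tendsto_pow_atTop_nhds_zero_of_lt_one (by norm_num) (by norm_num)
  · exact Eventually.of_forall fun n => dy_pos n

lemma tendsto_nfun : Tendsto nfun (𝓝[>] (0:ℝ)) atTop := by
  apply tendsto_nat_floor_atTop.comp
  exact (Real.tendsto_logb_atTop (by norm_num)).comp tendsto_inv_nhdsGT_zero

lemma nfun_bounds {ε : ℝ} (h0 : 0 < ε) (h1 : ε ≤ 1) :
    (2:ℝ) ^ (nfun ε) ≤ ε⁻¹ ∧ ε⁻¹ < 2 ^ (nfun ε + 1) := by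
  have hinv : 1 ≤ ε⁻¹ := (one_le_inv_iff₀).2 ⟨h0, h1⟩
  have hlogb : 0 ≤ Real.logb 2 ε⁻¹ := Real.logb_nonneg (by norm_num) hinv
  have hfl : (nfun ε : ℝ) ≤ Real.logb 2 ε⁻¹ := Nat.floor_le hlogb
  have hfu : Real.logb 2 ε⁻¹ < nfun ε + 1 := Nat.lt_floor_add_one _
  have hrw : (2:ℝ) ^ (Real.logb 2 ε⁻¹) = ε⁻¹ :=
    Real.rpow_logb (by norm_num) (by norm_num) (by positivity)
  constructor
  · calc (2:ℝ) ^ (nfun ε) = (2:ℝ) ^ ((nfun ε : ℝ)) := (Real.rpow_natCast 2 _).symm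
    _ ≤ (2:ℝ) ^ (Real.logb 2 ε⁻¹) := by
        apply Real.rpow_le_rpow_of_exponent_le (by norm_num) hfl
    _ = ε⁻¹ := hrw
  · calc ε⁻¹ = (2:ℝ) ^ (Real.logb 2 ε⁻¹) := hrw.symm
    _ < (2:ℝ) ^ (((nfun ε : ℝ) + 1)) := by
        apply Real.rpow_lt_rpow_of_exponent_lt (by norm_num) hfu
    _ = (2:ℝ) ^ (nfun ε + 1) := by
        rw [show ((nfun ε : ℝ) + 1) = ((nfun ε + 1 : ℕ) : ℝ) by push_cast; ring,
          Real.rpow_natCast]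



section Keys
variable {f g h : ℝ → ℝ}

lemma Tsum_add_le (hf : ContinuousOn f (Icc 0 1)) (hg : ContinuousOn g (Icc 0 1)) (n : ℕ) :
    Tsum (f + g) n ≤ Tsum f n + Tsum g n := by
  unfold Tsum
  rw [← Finset.sum_add_distrib]
  exact Finset.sum_le_sum fun k hk => osc_add_le hf hg (Finset.mem_range.1 hk)

lemma Tsum_sub_le (hf : ContinuousOn f (Icc 0 1)) (hg : ContinuousOn g (Icc 0 1)) (n : ℕ) :
    Tsum g n ≤ Tsum f n + Tsum (f + g) n := by
  unfold Tsum
  rw [← Finset.sum_add_distrib]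
  refine Finset.sum_le_sum fun k hk => ?_
  have := osc_sub_le hf hg (Finset.mem_range.1 hk)
  linarith

lemma key_ub (hf : ContinuousOn f (Icc 0 1)) (hg : ContinuousOn g (Icc 0 1)) (n : ℕ) :
    (covNum (graphOver (f + g) (Icc 0 1)) (dy n) : ℝ) ≤
      8 * covNum (graphOver f (Icc 0 1)) (dy n) +
      8 * covNum (graphOver g (Icc 0 1)) (dy n) + 2 ^ (n + 1) := by
  have h1 := covNum_le (f + g) (hf.add hg) n
  have h2 := Tsum_add_le hf hg n
  have h3 := Tsum_le f hf n
  have h4 := Tsum_le g hg n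
  unfold dy
  nlinarith [pow_pos (show (0:ℝ) < 2 by norm_num) n]

lemma key_lb (hf : ContinuousOn f (Icc 0 1)) (hg : ContinuousOn g (Icc 0 1)) (n : ℕ) :
    (covNum (graphOver g (Icc 0 1)) (dy n) : ℝ) ≤
      8 * covNum (graphOver f (Icc 0 1)) (dy n) +
      8 * covNum (graphOver (f + g) (Icc 0 1)) (dy n) + 2 ^ (n + 1) := by
  have h1 := covNum_le g hg n
  have h2 := Tsum_sub_le hf hg n
  have h3 := Tsum_le f hf n
  have h4 := Tsum_le (f + g) (hf.add hg) n
  unfold dy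
  nlinarith [pow_pos (show (0:ℝ) < 2 by norm_num) n]

end Keys

section Qfun
variable {h : ℝ → ℝ}

noncomputable def q (h : ℝ → ℝ) (ε : ℝ) : ℝ :=
  Real.log (covNum (graphOver h (Icc 0 1)) ε) / Real.log (1 / ε)

lemma ev_small : ∀ᶠ ε in 𝓝[>] (0:ℝ), 0 < ε ∧ ε ≤ 1/2 := by
  filter_upwards [self_mem_nhdsWithin,
    (eventually_le_nhds (show (0:ℝ) < 1/2 by norm_num)).filter_mono nhdsWithin_le_nhds]
    with ε h1 h2
  exact ⟨h1, h2⟩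

lemma log_inv_pos {ε : ℝ} (h0 : 0 < ε) (h1 : ε ≤ 1/2) : Real.log 2 ≤ Real.log (1/ε) := by
  apply Real.log_le_log (by norm_num)
  rw [le_one_div h0] at *
  · linarith
  · norm_num

lemma q_nonneg (hc : ContinuousOn h (Icc 0 1)) :
    ∀ᶠ ε in 𝓝[>] (0:ℝ), 0 ≤ q h ε := by
  filter_upwards [ev_small] with ε ⟨h0, h1⟩
  have hN : 1 ≤ covNum (graphOver h (Icc 0 1)) ε := covNum_pos hc h0
  apply div_nonneg
  · apply Real.log_nonneg
    exact_mod_cast hN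
  · linarith [log_inv_pos h0 h1, Real.log_pos (show (1:ℝ) < 2 by norm_num)]

lemma isBounded_ge (hc : ContinuousOn h (Icc 0 1)) :
    Filter.IsBoundedUnder (· ≥ ·) (𝓝[>] (0:ℝ)) (q h) :=
  ⟨0, Filter.eventually_map.2 (q_nonneg hc)⟩

lemma q_le_three (hc : ContinuousOn h (Icc 0 1)) :
    ∀ᶠ ε in 𝓝[>] (0:ℝ), q h ε ≤ 3 := by
  obtain ⟨C, hC1, hC⟩ := Tsum_global_bound hc
  -- threshold for n
  have hlog2 : (0:ℝ) < Real.log 2 := Real.log_pos (by norm_num)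
  have htend : Tendsto (fun n : ℕ => (n : ℝ) * Real.log 2) atTop atTop := by
    exact Tendsto.atTop_mul_const hlog2 tendsto_natCast_atTop_atTop
  have hev : ∀ᶠ n : ℕ in atTop, Real.log (C + 2) + 2 * Real.log 2 ≤ (n : ℝ) * Real.log 2 :=
    htend.eventually_ge_atTop _
  filter_upwards [ev_small, tendsto_nfun.eventually hev,
    tendsto_nfun.eventually (Filter.eventually_ge_atTop 1)] with ε ⟨h0, h1⟩ hn hn1
  set n := nfun ε with hndef
  obtain ⟨hb1, hb2⟩ := nfun_bounds h0 (by linarith)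
  have hεdy : dy (n+1) ≤ ε := by
    unfold dy
    rw [inv_le_comm₀ (by positivity) h0]
    exact le_of_lt hb2
  have hNmono : covNum (graphOver h (Icc 0 1)) ε ≤
      covNum (graphOver h (Icc 0 1)) (dy (n+1)) :=
    covNum_anti (coverSet_nonempty hc (dy_pos (n+1))) hεdy
  have hNbound : (covNum (graphOver h (Icc 0 1)) (dy (n+1)) : ℝ) ≤ 2 ^ (2*(n+1)) * (C + 2) := by
    have := covNum_le h hc (n+1)
    have h2 := hC (n+1)
    unfold dy
    calc (covNum (graphOver h (Icc 0 1)) ((2 ^ (n+1) : ℝ)⁻¹) : ℝ)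
        ≤ 2 ^ (n+1) * Tsum h (n+1) + 2 ^ (n+1+1) := this
    _ ≤ 2 ^ (n+1) * (2 ^ (n+1) * C) + 2 ^ (n+1+1) := by
        nlinarith [pow_pos (show (0:ℝ) < 2 by norm_num) (n+1),
          pow_nonneg (show (0:ℝ) ≤ 2 by norm_num) (n+1)]
    _ ≤ 2 ^ (2*(n+1)) * (C + 2) := by
        have e : (2:ℝ)^(n+1) * (2^(n+1) * C) = 2^(2*(n+1)) * C := by
          rw [← mul_assoc, ← pow_add, two_mul]
        have hpow : (2:ℝ) ^ (n+1+1) ≤ 2 ^ (2*(n+1)) :=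
          pow_le_pow_right₀ (by norm_num) (by omega)
        have hq : (0:ℝ) ≤ 2 ^ (2*(n+1)) := by positivity
        nlinarith [e, hpow, hq]
  -- now bound q
  have hNpos : (0:ℝ) < covNum (graphOver h (Icc 0 1)) ε := by
    exact_mod_cast covNum_pos hc h0
  have hlogN : Real.log (covNum (graphOver h (Icc 0 1)) ε) ≤
      Real.log (C + 2) + (2*(n+1)) * Real.log 2 := by
    calc Real.log (covNum (graphOver h (Icc 0 1)) ε)
        ≤ Real.log (2 ^ (2*(n+1)) * (C + 2)) := by
          apply Real.log_le_log hNpos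
          calc (covNum (graphOver h (Icc 0 1)) ε : ℝ)
              ≤ (covNum (graphOver h (Icc 0 1)) (dy (n+1)) : ℝ) := by exact_mod_cast hNmono
          _ ≤ _ := hNbound
    _ = (2*(n+1)) * Real.log 2 + Real.log (C + 2) := by
          rw [Real.log_mul (by positivity) (by linarith), Real.log_pow]
          push_cast
          ring
    _ = _ := by ring
  have hlogε : (n : ℝ) * Real.log 2 ≤ Real.log (1/ε) := by
    rw [one_div]
    calc (n:ℝ) * Real.log 2 = Real.log (2 ^ n) := by rw [Real.log_pow]
    _ ≤ Real.log ε⁻¹ := Real.log_le_log (by positivity) hb1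
  have hlogεpos : 0 < Real.log (1/ε) := by
    linarith [log_inv_pos h0 h1, hlog2]
  rw [q, div_le_iff₀ hlogεpos]
  have hn1' : (1:ℝ) ≤ (n:ℝ) := by exact_mod_cast hn1
  nlinarith [hlogN, hlogε, hn, hlog2]

lemma isBounded_le (hc : ContinuousOn h (Icc 0 1)) :
    Filter.IsBoundedUnder (· ≤ ·) (𝓝[>] (0:ℝ)) (q h) :=
  ⟨3, Filter.eventually_map.2 (q_le_three hc)⟩

end Qfun

section Dim
variable {h : ℝ → ℝ}

lemma log_one_div_dy (n : ℕ) : Real.log (1 / dy n) = n * Real.log 2 := by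
  unfold dy
  rw [one_div, inv_inv, Real.log_pow]

lemma exp_nlog2 (n : ℕ) : Real.exp ((n:ℝ) * Real.log 2) = 2 ^ n := by
  rw [mul_comm, Real.exp_mul, Real.exp_log (by norm_num : (0:ℝ) < 2)]
  exact Real.rpow_natCast 2 n

lemma one_le_liminf_q (hc : ContinuousOn h (Icc 0 1)) :
    1 ≤ liminf (q h) (𝓝[>] (0:ℝ)) := by
  have key : ∀ c : ℝ, c < 1 → c ≤ liminf (q h) (𝓝[>] (0:ℝ)) := by
    intro c hc1
    apply Filter.le_liminf_of_le ((isBounded_le hc).isCoboundedUnder_ge)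
    have htends : Tendsto (fun ε : ℝ => Real.log (1/ε)) (𝓝[>] (0:ℝ)) atTop := by
      have := Real.tendsto_log_atTop.comp (tendsto_inv_nhdsGT_zero (𝕜 := ℝ))
      refine this.congr fun x => ?_
      simp [Function.comp, one_div]
    filter_upwards [ev_small, htends.eventually_ge_atTop (Real.log 2 / (1 - c))]
      with ε hsm hlarge
    obtain ⟨h0, h1⟩ := hsm
    set L := Real.log (1/ε) with hL
    have hlog2 : (0:ℝ) < Real.log 2 := Real.log_pos (by norm_num)
    have hL0 : 0 < L := lt_of_lt_of_le hlog2 (log_inv_pos h0 h1)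
    have hlow := covNum_lower hc h0
    have hcov : (1:ℝ)/(2*ε) ≤ (covNum (graphOver h (Icc 0 1)) ε : ℝ) := by
      rw [div_le_iff₀ (by positivity)]
      linarith
    have hcovpos : (0:ℝ) < (covNum (graphOver h (Icc 0 1)) ε : ℝ) := by
      have := covNum_pos hc h0
      exact_mod_cast this
    have hlogc : L - Real.log 2 ≤ Real.log (covNum (graphOver h (Icc 0 1)) ε) := by
      have := Real.log_le_log (by positivity : (0:ℝ) < 1/(2*ε)) hcov
      have heq : Real.log (1/(2*ε)) = L - Real.log 2 := by
        rw [hL, one_div, one_div, Real.log_inv, Real.log_inv, Real.log_mul (by norm_num) (ne_of_gt h0)]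
        ring
      linarith [heq ▸ this]
    have hLc : Real.log 2 / (1 - c) ≤ L := hlarge
    have : c * L ≤ L - Real.log 2 := by
      rw [div_le_iff₀ (by linarith)] at hLc
      nlinarith
    rw [q, ← hL, le_div_iff₀ hL0]
    linarith
  by_contra hcon
  push_neg at hcon
  have := key ((liminf (q h) (𝓝[>] (0:ℝ)) + 1)/2) (by linarith)
  linarith

lemma ev_dyadic_lt (hc : ContinuousOn h (Icc 0 1)) {θ : ℝ}
    (hlt : limsup (q h) (𝓝[>] (0:ℝ)) < θ) :
    ∀ᶠ n : ℕ in atTop,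
      (covNum (graphOver h (Icc 0 1)) (dy n) : ℝ) < Real.exp (θ * n * Real.log 2) := by
  have hev := Filter.eventually_lt_of_limsup_lt hlt (isBounded_le hc)
  filter_upwards [tendsto_dy.eventually hev, Filter.eventually_ge_atTop 1] with n hq hn1
  have hlog2 : (0:ℝ) < Real.log 2 := Real.log_pos (by norm_num)
  have hn1' : (1:ℝ) ≤ (n:ℝ) := by exact_mod_cast hn1
  have hL0 : 0 < (n:ℝ) * Real.log 2 := by nlinarith
  have hNpos : (0:ℝ) < (covNum (graphOver h (Icc 0 1)) (dy n) : ℝ) := by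
    exact_mod_cast covNum_pos hc (dy_pos n)
  rw [q, log_one_div_dy, div_lt_iff₀ hL0] at hq
  rw [← Real.log_lt_iff_lt_exp hNpos]
  calc Real.log (covNum (graphOver h (Icc 0 1)) (dy n)) < θ * ((n:ℝ) * Real.log 2) := hq
  _ = θ * n * Real.log 2 := by ring

lemma ev_dyadic_gt (hc : ContinuousOn h (Icc 0 1)) {θ' : ℝ} (hθ'0 : 0 ≤ θ')
    (hgt : θ' < liminf (q h) (𝓝[>] (0:ℝ))) :
    ∀ᶠ n : ℕ in atTop,
      Real.exp (θ' * n * Real.log 2) < (covNum (graphOver h (Icc 0 1)) (dy n) : ℝ) := by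
  have hev := Filter.eventually_lt_of_lt_liminf hgt (isBounded_ge hc)
  filter_upwards [tendsto_dy.eventually hev, Filter.eventually_ge_atTop 1] with n hq hn1
  have hlog2 : (0:ℝ) < Real.log 2 := Real.log_pos (by norm_num)
  have hn1' : (1:ℝ) ≤ (n:ℝ) := by exact_mod_cast hn1
  have hL0 : 0 < (n:ℝ) * Real.log 2 := by nlinarith
  have hNpos : (0:ℝ) < (covNum (graphOver h (Icc 0 1)) (dy n) : ℝ) := by
    exact_mod_cast covNum_pos hc (dy_pos n)
  rw [q, log_one_div_dy, lt_div_iff₀ hL0] at hq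
  rw [show θ' * (n:ℝ) * Real.log 2 = θ' * ((n:ℝ) * Real.log 2) by ring,
    ← Real.lt_log_iff_exp_lt hNpos]
  exact hq

end Dim

section Main
variable {f g : ℝ → ℝ}

lemma tendsto_lin (a b : ℝ) (ha : 0 < a) :
    Tendsto (fun n : ℕ => a * (n:ℝ) + b) atTop atTop := by
  apply Filter.tendsto_atTop_add_const_right
  exact (tendsto_natCast_atTop_atTop (R := ℝ)).const_mul_atTop ha

set_option maxHeartbeats 1000000 in
lemma partA (hf : ContinuousOn f (Icc 0 1)) (hg : ContinuousOn g (Icc 0 1)) {α β : ℝ}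
    (hlimsup_f : limsup (q f) (𝓝[>] (0:ℝ)) = α)
    (hliminf_g : liminf (q g) (𝓝[>] (0:ℝ)) = β)
    (hα1 : 1 ≤ α) (hαβ : α < β) {c : ℝ} (hc : c < β) :
    c ≤ liminf (q (f + g)) (𝓝[>] (0:ℝ)) := by
  have hcfg : ContinuousOn (f + g) (Icc 0 1) := hf.add hg
  have hlog2 : (0:ℝ) < Real.log 2 := Real.log_pos (by norm_num)
  set m := max c ((α+β)/2) with hm
  set θ' := (m+β)/2 with hθ'
  set θ := (α+θ')/2 with hθ
  have hmβ : m < β := max_lt hc (by linarith)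
  have hmα : (α+β)/2 ≤ m := le_max_right _ _
  have hαθ' : α < θ' := by rw [hθ']; linarith
  have hθα : α < θ := by rw [hθ]; linarith
  have hθθ' : θ < θ' := by rw [hθ]; linarith
  have hθ'β : θ' < β := by rw [hθ']; linarith
  have hcθ' : c < θ' := by
    have := le_max_left c ((α+β)/2)
    rw [hθ']; linarith [hmβ]
  have hθ1 : 1 ≤ θ := by linarith
  -- dyadic eventual facts
  have E1 := ev_dyadic_lt hf (hlimsup_f ▸ hθα)
  have E2 := ev_dyadic_gt hg (by linarith : (0:ℝ) ≤ θ') (hliminf_g ▸ hθ'β)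
  have E3 : ∀ᶠ n : ℕ in atTop, (20:ℝ) ≤ Real.exp ((θ' - θ) * n * Real.log 2) := by
    have ht : Tendsto (fun n : ℕ => (θ' - θ) * Real.log 2 * (n:ℝ) + 0) atTop atTop :=
      tendsto_lin _ _ (by nlinarith)
    have := (Real.tendsto_exp_atTop.comp ht).eventually_ge_atTop 20
    filter_upwards [this] with n hn
    simpa [Function.comp, mul_comm, mul_assoc, mul_left_comm] using hn
  have E4 : ∀ᶠ n : ℕ in atTop,
      Real.exp (θ' * n * Real.log 2) / 16 ≤ (covNum (graphOver (f+g) (Icc 0 1)) (dy n) : ℝ) := by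
    filter_upwards [E1, E2, E3] with n e1 e2 e3
    have key := key_lb hf hg n
    have h2n : (2:ℝ) ^ (n+1) ≤ 2 * Real.exp (θ * n * Real.log 2) := by
      have h1 : (2:ℝ) ^ (n+1) = 2 * Real.exp ((n:ℝ) * Real.log 2) := by
        rw [exp_nlog2]; ring
      have h2 : Real.exp ((n:ℝ) * Real.log 2) ≤ Real.exp (θ * n * Real.log 2) := by
        apply Real.exp_le_exp.2
        have := mul_nonneg (mul_nonneg (sub_nonneg.2 hθ1) (Nat.cast_nonneg (α := ℝ) n)) hlog2.le
        nlinarith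
      linarith
    have hsplit : 20 * Real.exp (θ * n * Real.log 2) ≤ Real.exp (θ' * n * Real.log 2) := by
      have : Real.exp (θ' * n * Real.log 2) =
          Real.exp ((θ' - θ) * n * Real.log 2) * Real.exp (θ * n * Real.log 2) := by
        rw [← Real.exp_add]; ring_nf
      rw [this]
      have hpos := Real.exp_pos (θ * n * Real.log 2)
      nlinarith
    nlinarith
  -- transfer to ε
  have E5a : ∀ᶠ n : ℕ in atTop,
      c * (((n:ℝ)+1) * Real.log 2) ≤ θ' * n * Real.log 2 - Real.log 16 := by
    have ht := (tendsto_lin ((θ' - c) * Real.log 2) (-(Real.log 16 + c * Real.log 2))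
      (by nlinarith)).eventually_ge_atTop 0
    filter_upwards [ht] with n hn
    nlinarith
  have E5b : ∀ᶠ n : ℕ in atTop, (0:ℝ) ≤ θ' * n * Real.log 2 - Real.log 16 := by
    have ht := (tendsto_lin (θ' * Real.log 2) (-Real.log 16)
      (by nlinarith)).eventually_ge_atTop 0
    filter_upwards [ht] with n hn
    nlinarith
  apply Filter.le_liminf_of_le ((isBounded_le hcfg).isCoboundedUnder_ge)
  filter_upwards [ev_small, tendsto_nfun.eventually E4, tendsto_nfun.eventually E5a,
    tendsto_nfun.eventually E5b] with ε hsm e4 e5a e5b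
  obtain ⟨h0, h1⟩ := hsm
  set n := nfun ε with hn
  obtain ⟨hb1, hb2⟩ := nfun_bounds h0 (by linarith)
  have hεdy : ε ≤ dy n := by
    unfold dy
    rw [le_inv_comm₀ h0 (by positivity)]
    exact hb1
  have hmono : covNum (graphOver (f+g) (Icc 0 1)) (dy n) ≤
      covNum (graphOver (f+g) (Icc 0 1)) ε :=
    covNum_anti (coverSet_nonempty hcfg h0) hεdy
  have hNpos : (0:ℝ) < (covNum (graphOver (f+g) (Icc 0 1)) ε : ℝ) := by
    exact_mod_cast covNum_pos hcfg h0
  have hNdypos : (0:ℝ) < (covNum (graphOver (f+g) (Icc 0 1)) (dy n) : ℝ) := by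
    exact_mod_cast covNum_pos hcfg (dy_pos n)
  have hlogN : θ' * n * Real.log 2 - Real.log 16 ≤
      Real.log (covNum (graphOver (f+g) (Icc 0 1)) ε) := by
    have l1 : Real.log (Real.exp (θ' * n * Real.log 2) / 16) ≤
        Real.log (covNum (graphOver (f+g) (Icc 0 1)) (dy n)) :=
      Real.log_le_log (by positivity) e4
    have l2 : Real.log (covNum (graphOver (f+g) (Icc 0 1)) (dy n)) ≤
        Real.log (covNum (graphOver (f+g) (Icc 0 1)) ε) := by
      apply Real.log_le_log hNdypos
      exact_mod_cast hmono
    have l3 : Real.log (Real.exp (θ' * n * Real.log 2) / 16) =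
        θ' * n * Real.log 2 - Real.log 16 := by
      rw [Real.log_div (Real.exp_ne_zero _) (by norm_num), Real.log_exp]
    linarith
  have hL0 : 0 < Real.log (1/ε) := lt_of_lt_of_le hlog2 (log_inv_pos h0 h1)
  have hLle : Real.log (1/ε) ≤ ((n:ℝ)+1) * Real.log 2 := by
    rw [one_div]
    have : Real.log ε⁻¹ ≤ Real.log (2 ^ (n+1)) :=
      Real.log_le_log (by positivity) (le_of_lt hb2)
    rw [Real.log_pow] at this
    push_cast at this
    linarith
  rw [q, le_div_iff₀ hL0]
  rcases le_or_gt 0 c with hc0 | hc0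
  · have : c * Real.log (1/ε) ≤ c * (((n:ℝ)+1) * Real.log 2) :=
      mul_le_mul_of_nonneg_left hLle hc0
    linarith
  · have : c * Real.log (1/ε) ≤ 0 := by
      apply mul_nonpos_of_nonpos_of_nonneg (le_of_lt hc0) (le_of_lt hL0)
    linarith


set_option maxHeartbeats 1000000 in
lemma partB (hf : ContinuousOn f (Icc 0 1)) (hg : ContinuousOn g (Icc 0 1)) {α β : ℝ}
    (hlimsup_f : limsup (q f) (𝓝[>] (0:ℝ)) = α)
    (hliminf_g : liminf (q g) (𝓝[>] (0:ℝ)) = β)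
    (hα1 : 1 ≤ α) (hαβ : α < β) {c : ℝ} (hc : β < c) :
    liminf (q (f + g)) (𝓝[>] (0:ℝ)) ≤ c := by
  have hcfg : ContinuousOn (f + g) (Icc 0 1) := hf.add hg
  have hlog2 : (0:ℝ) < Real.log 2 := Real.log_pos (by norm_num)
  set δ := (c - β)/2 with hδ
  have hδ0 : 0 < δ := by rw [hδ]; linarith
  have hβδc : β + δ < c := by rw [hδ]; linarith
  set θ := (α + β)/2 with hθ
  have hθα : α < θ := by rw [hθ]; linarith
  have hθβ : θ < β := by rw [hθ]; linarith
  have hθ1 : 1 ≤ θ := by linarith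
  have hβδ1 : 1 ≤ β + δ := by linarith
  -- frequently small q g
  have hfreq : ∃ᶠ ε in 𝓝[>] (0:ℝ), q g ε < β + δ :=
    Filter.frequently_lt_of_liminf_lt ((isBounded_le hg).isCoboundedUnder_ge)
      (by rw [hliminf_g]; linarith)
  have E1 := ev_dyadic_lt hf (hlimsup_f ▸ hθα)
  have E6 : ∀ᶠ n : ℕ in atTop,
      Real.log 18 + (β+δ) * ((n:ℝ)+1) * Real.log 2 ≤ c * ((n:ℝ) * Real.log 2) := by
    have ht := (tendsto_lin ((c - (β+δ)) * Real.log 2)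
      (-(Real.log 18 + (β+δ) * Real.log 2)) (by nlinarith)).eventually_ge_atTop 0
    filter_upwards [ht] with n hn
    nlinarith
  have evBundle : ∀ᶠ ε in 𝓝[>] (0:ℝ), (0 < ε ∧ ε ≤ 1/2) ∧
      ((covNum (graphOver f (Icc 0 1)) (dy (nfun ε)) : ℝ) <
        Real.exp (θ * (nfun ε) * Real.log 2)) ∧
      (Real.log 18 + (β+δ) * ((nfun ε : ℝ)+1) * Real.log 2 ≤
        c * ((nfun ε : ℝ) * Real.log 2)) ∧ 1 ≤ nfun ε := by
    filter_upwards [ev_small, tendsto_nfun.eventually E1, tendsto_nfun.eventually E6,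
      tendsto_nfun.eventually (Filter.eventually_ge_atTop 1)] with ε a b c' d
    exact ⟨a, b, c', d⟩
  have hfreq2 := hfreq.and_eventually evBundle
  have hfreq3 : ∃ᶠ ε in 𝓝[>] (0:ℝ), q (f + g) (dy (nfun ε)) ≤ c := by
    refine hfreq2.mono ?_
    rintro ε ⟨hqg, ⟨h0, h1⟩, e1, e6, hn1⟩
    set n := nfun ε with hn
    obtain ⟨hb1, hb2⟩ := nfun_bounds h0 (by linarith)
    have hn1' : (1:ℝ) ≤ (n:ℝ) := by exact_mod_cast hn1
    have hεdy : ε ≤ dy n := by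
      unfold dy
      rw [le_inv_comm₀ h0 (by positivity)]
      exact hb1
    have hL0 : 0 < Real.log (1/ε) := lt_of_lt_of_le hlog2 (log_inv_pos h0 h1)
    have hLle : Real.log (1/ε) ≤ ((n:ℝ)+1) * Real.log 2 := by
      rw [one_div]
      have : Real.log ε⁻¹ ≤ Real.log (2 ^ (n+1)) :=
        Real.log_le_log (by positivity) (le_of_lt hb2)
      rw [Real.log_pow] at this
      push_cast at this
      linarith
    -- bound N_g at scale dy n
    have hNgpos : (0:ℝ) < (covNum (graphOver g (Icc 0 1)) ε : ℝ) := by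
      exact_mod_cast covNum_pos hg h0
    have hNg : (covNum (graphOver g (Icc 0 1)) (dy n) : ℝ) ≤
        Real.exp ((β+δ) * ((n:ℝ)+1) * Real.log 2) := by
      have hmono : covNum (graphOver g (Icc 0 1)) (dy n) ≤
          covNum (graphOver g (Icc 0 1)) ε :=
        covNum_anti (coverSet_nonempty hg h0) hεdy
      have hq' : Real.log (covNum (graphOver g (Icc 0 1)) ε) < (β+δ) * Real.log (1/ε) := by
        rw [q, div_lt_iff₀ hL0] at hqg
        linarith
      have : (covNum (graphOver g (Icc 0 1)) ε : ℝ) < Real.exp ((β+δ) * Real.log (1/ε)) := by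
        rw [← Real.log_lt_iff_lt_exp hNgpos]
        exact hq'
      have hexp : Real.exp ((β+δ) * Real.log (1/ε)) ≤
          Real.exp ((β+δ) * (((n:ℝ)+1) * Real.log 2)) := by
        apply Real.exp_le_exp.2
        apply mul_le_mul_of_nonneg_left hLle (by linarith)
      calc (covNum (graphOver g (Icc 0 1)) (dy n) : ℝ)
          ≤ (covNum (graphOver g (Icc 0 1)) ε : ℝ) := by exact_mod_cast hmono
      _ ≤ Real.exp ((β+δ) * (((n:ℝ)+1) * Real.log 2)) := by linarith
      _ = Real.exp ((β+δ) * ((n:ℝ)+1) * Real.log 2) := by ring_nf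
    -- bound N_{f+g} at dy n
    have key := key_ub hf hg n
    have hE : Real.exp (θ * (n:ℝ) * Real.log 2) ≤
        Real.exp ((β+δ) * ((n:ℝ)+1) * Real.log 2) := by
      apply Real.exp_le_exp.2
      have h1' : θ * (n:ℝ) ≤ (β+δ) * ((n:ℝ)+1) := by nlinarith
      nlinarith
    have h2n : (2:ℝ) ^ (n+1) ≤ 2 * Real.exp ((β+δ) * ((n:ℝ)+1) * Real.log 2) := by
      have e0 : (2:ℝ) ^ (n+1) = 2 * Real.exp ((n:ℝ) * Real.log 2) := by
        rw [exp_nlog2]; ring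
      have e1' : Real.exp ((n:ℝ) * Real.log 2) ≤
          Real.exp ((β+δ) * ((n:ℝ)+1) * Real.log 2) := by
        apply Real.exp_le_exp.2
        nlinarith
      linarith
    have hNfg : (covNum (graphOver (f+g) (Icc 0 1)) (dy n) : ℝ) ≤
        18 * Real.exp ((β+δ) * ((n:ℝ)+1) * Real.log 2) := by
      nlinarith
    -- conclude on q (f+g) (dy n)
    have hNfgpos : (0:ℝ) < (covNum (graphOver (f+g) (Icc 0 1)) (dy n) : ℝ) := by
      exact_mod_cast covNum_pos hcfg (dy_pos n)
    have hlogNfg : Real.log (covNum (graphOver (f+g) (Icc 0 1)) (dy n)) ≤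
        Real.log 18 + (β+δ) * ((n:ℝ)+1) * Real.log 2 := by
      have := Real.log_le_log hNfgpos hNfg
      rw [Real.log_mul (by norm_num) (Real.exp_ne_zero _), Real.log_exp] at this
      linarith
    have hLdy : 0 < (n:ℝ) * Real.log 2 := by nlinarith
    rw [q, log_one_div_dy, div_le_iff₀ hLdy]
    linarith
  have hfreq4 : ∃ᶠ ε' in 𝓝[>] (0:ℝ), q (f + g) ε' ≤ c :=
    (tendsto_dy.comp tendsto_nfun).frequently hfreq3
  exact Filter.liminf_le_of_frequently_le hfreq4 (isBounded_ge hcfg)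

end Main

end BoxAux

theorem stmt10 (f g : ℝ → ℝ) (α β : ℝ)
    (hf : ContinuousOn f (Set.Icc 0 1)) (hg : ContinuousOn g (Set.Icc 0 1))
    (hα : udim (graphOver f (Set.Icc 0 1)) = α)
    (hex : ldim (graphOver f (Set.Icc 0 1)) = α)
    (hβ : ldim (graphOver g (Set.Icc 0 1)) = β)
    (hαβ : α < β) :
    ldim (graphOver (f + g) (Set.Icc 0 1)) = β := by
  have hlimsup_f : limsup (BoxAux.q f) (𝓝[>] (0:ℝ)) = α := hα
  have hliminf_f : liminf (BoxAux.q f) (𝓝[>] (0:ℝ)) = α := hex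
  have hliminf_g : liminf (BoxAux.q g) (𝓝[>] (0:ℝ)) = β := hβ
  have hα1 : (1:ℝ) ≤ α := hliminf_f ▸ BoxAux.one_le_liminf_q hf
  have hle : liminf (BoxAux.q (f + g)) (𝓝[>] (0:ℝ)) ≤ β := by
    by_contra hcon
    push_neg at hcon
    have := BoxAux.partB hf hg hlimsup_f hliminf_g hα1 hαβ
      (c := (β + liminf (BoxAux.q (f + g)) (𝓝[>] (0:ℝ)))/2) (by linarith)
    linarith
  have hge : β ≤ liminf (BoxAux.q (f + g)) (𝓝[>] (0:ℝ)) := by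
    by_contra hcon
    push_neg at hcon
    have := BoxAux.partA hf hg hlimsup_f hliminf_g hα1 hαβ
      (c := (liminf (BoxAux.q (f + g)) (𝓝[>] (0:ℝ)) + β)/2) (by linarith)
    linarith
  exact le_antisymm hle hge
end

section
/- Let B be standard Brownian motion in ℝ^d and let 0 ≤ s < t ≤ 1 with t − s ≤ (2^k ε / log(1/ε))², and let v ∈ ℝ^d with |v| ≥ 2^k ε for some integer k ≥ 2 and ε ∈ (0, 1/2). Then P(|B(t) − B(s) + v| < 2ε) ≤ 2d·exp(−c(log(1/ε))²/d) for some absolute constant c > 0. -/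
open MeasureTheory ProbabilityTheory
open Real

lemma gauss_tail (v : NNReal) (hv : v ≠ 0) (a : ℝ) (ha : 0 ≤ a) :
    (gaussianReal 0 v {x : ℝ | a ≤ |x|}).toReal ≤ 2 * Real.exp (-(a^2) / (4*v)) := by
  have hvpos : (0:ℝ) < v := lt_of_le_of_ne v.coe_nonneg (by exact_mod_cast (Ne.symm hv))
  have hS : MeasurableSet {x : ℝ | a ≤ |x|} :=
    (isClosed_le continuous_const continuous_abs).measurableSet
  rw [gaussianReal_apply_eq_integral _ hv, ENNReal.toReal_ofReal
    (integral_nonneg fun x => gaussianPDFReal_nonneg _ _ _)]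
  set g : ℝ → ℝ := fun x => Real.exp (-(a^2)/(4*v)) * ((Real.sqrt (2*π*v))⁻¹ * Real.exp (-(1/(4*v)) * x^2)) with hg
  have hgint : Integrable g := by
    apply Integrable.const_mul
    apply Integrable.const_mul
    exact integrable_exp_neg_mul_sq (by positivity)
  have h1 : ∫ x in {x : ℝ | a ≤ |x|}, gaussianPDFReal 0 v x ≤ ∫ x in {x : ℝ | a ≤ |x|}, g x := by
    refine setIntegral_mono_on ((integrable_gaussianPDFReal 0 v).restrict) hgint.integrableOn hS ?_
    intro x hx
    simp only [Set.mem_setOf_eq] at hx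
    have hx2 : a^2 ≤ x^2 := by
      have := sq_abs x
      nlinarith [abs_nonneg x]
    have key : -(x-0)^2/(2*(v:ℝ)) ≤ -(a^2)/(4*(v:ℝ)) + (-(1/(4*(v:ℝ)))*x^2) := by
      have h4v : (0:ℝ) < 4*v := by positivity
      have e1 : -(x-0)^2/(2*(v:ℝ)) = (-2*x^2)/(4*(v:ℝ)) := by ring
      have e2 : -(a^2)/(4*(v:ℝ)) + (-(1/(4*(v:ℝ)))*x^2) = (-(a^2) + -x^2)/(4*(v:ℝ)) := by
        field_simp
      rw [e1, e2, div_le_div_iff₀ h4v h4v]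
      nlinarith
    show (Real.sqrt (2*π*(v:ℝ)))⁻¹ * Real.exp (-(x-0)^2/(2*(v:ℝ))) ≤
      Real.exp (-(a^2)/(4*(v:ℝ))) * ((Real.sqrt (2*π*(v:ℝ)))⁻¹ * Real.exp (-(1/(4*(v:ℝ))) * x^2))
    rw [← mul_assoc, mul_comm (Real.exp (-(a^2)/(4*v))), mul_assoc ((Real.sqrt (2*π*(v:ℝ)))⁻¹) (Real.exp (-(a^2)/(4*(v:ℝ)))), ← Real.exp_add]
    exact mul_le_mul_of_nonneg_left (Real.exp_le_exp.2 key) (by positivity)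
  have h2 : ∫ x in {x : ℝ | a ≤ |x|}, g x ≤ ∫ x, g x :=
    setIntegral_le_integral hgint (Filter.Eventually.of_forall fun x => by positivity)
  have h3 : ∫ x, g x = Real.exp (-(a^2)/(4*v)) * ((Real.sqrt (2*π*v))⁻¹ * Real.sqrt (π / (1/(4*v)))) := by
    rw [hg, integral_const_mul, integral_const_mul, integral_gaussian]
  have hA : (0:ℝ) < 2*π*v := by positivity
  have h4 : (Real.sqrt (2*π*(v:ℝ)))⁻¹ * Real.sqrt (π / (1/(4*(v:ℝ)))) = Real.sqrt 2 := by
    have e : π / (1/(4*(v:ℝ))) = 2 * (2*π*(v:ℝ)) := by field_simp; ring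
    rw [e, Real.sqrt_mul (by norm_num : (0:ℝ) ≤ 2) (2*π*(v:ℝ)), mul_comm (Real.sqrt 2),
      ← mul_assoc, inv_mul_cancel₀ (Real.sqrt_ne_zero'.mpr hA), one_mul]
  calc _ ≤ ∫ x, g x := h1.trans h2
  _ = Real.exp (-(a^2)/(4*v)) * Real.sqrt 2 := by rw [h3, h4]
  _ ≤ 2 * Real.exp (-(a^2)/(4*v)) := by
      rw [mul_comm]
      apply mul_le_mul_of_nonneg_right _ (Real.exp_nonneg _)
      nlinarith [Real.sq_sqrt (by norm_num : (0:ℝ) ≤ 2), Real.sqrt_nonneg 2]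


theorem stmt19 : ∃ c : ℝ, 0 < c ∧
    ∀ (d : ℕ), 0 < d →
    ∀ (Ω : Type) (_ : MeasurableSpace Ω) (μ : Measure Ω), IsProbabilityMeasure μ →
    ∀ (B : ℝ → Ω → EuclideanSpace ℝ (Fin d)) (s t : ℝ), 0 ≤ s → s < t → t ≤ 1 →
      -- `B(t) − B(s)` is a centered Gaussian vector with covariance `(t−s)·I`:
      (∀ i : Fin d, Measure.map (fun ω => B t ω i - B s ω i) μ
          = gaussianReal 0 (t - s).toNNReal) →
      iIndepFun (fun (i : Fin d) (ω : Ω) => B t ω i - B s ω i) μ →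
    ∀ (v : EuclideanSpace ℝ (Fin d)) (ε : ℝ) (k : ℕ), 0 < ε → ε < 1 / 2 → 2 ≤ k →
      t - s ≤ ((2 : ℝ) ^ k * ε / Real.log (1 / ε)) ^ 2 →
      (2 : ℝ) ^ k * ε ≤ ‖v‖ →
      (μ {ω | ‖B t ω - B s ω + v‖ < 2 * ε}).toReal
        ≤ 2 * d * Real.exp (-c * (Real.log (1 / ε)) ^ 2 / d) := by
  refine ⟨1/16, by norm_num, ?_⟩
  intro d hd Ω _ μ hμ B s t hs hst ht1 hmap _ v ε k hε hε2 hk hts hnv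
  set L := Real.log (1/ε) with hLdef
  have hL : 0 < L := Real.log_pos (one_lt_one_div hε (by linarith))
  have hdR : (0:ℝ) < d := Nat.cast_pos.mpr hd
  set a : ℝ := 2^(k-1) * ε / Real.sqrt d with hadef
  have ha : 0 < a := by positivity
  set v2 : NNReal := (t - s).toNNReal with hv2def
  have hv2R : (v2:ℝ) = t - s := Real.coe_toNNReal _ (by linarith)
  have hv2pos : (0:ℝ) < v2 := by rw [hv2R]; linarith
  have hv2ne : v2 ≠ 0 := by
    intro h; rw [h] at hv2R; simp at hv2R; linarith
  have hpow2 : (2:ℝ)^k = 2 * 2^(k-1) := by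
    conv_lhs => rw [show k = (k-1)+1 by omega]
    rw [pow_succ]; ring
  have hpowge : (2:ℝ) ≤ 2^(k-1) := by
    calc (2:ℝ) = 2^1 := (pow_one 2).symm
    _ ≤ 2^(k-1) := pow_le_pow_right₀ (by norm_num) (by omega)
  -- inclusion into union of coordinate events
  have hsub : {ω | ‖B t ω - B s ω + v‖ < 2*ε}
      ⊆ ⋃ i : Fin d, {ω | a ≤ |B t ω i - B s ω i|} := by
    intro ω hω
    simp only [Set.mem_setOf_eq] at hω
    by_contra hcon
    simp only [Set.mem_iUnion, Set.mem_setOf_eq, not_exists, not_le] at hcon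
    have hY : ‖B t ω - B s ω‖ ≤ Real.sqrt d * a := by
      rw [EuclideanSpace.norm_eq]
      have hsum : ∑ i : Fin d, ‖(B t ω - B s ω) i‖^2 ≤ (d:ℝ) * a^2 := by
        calc ∑ i : Fin d, ‖(B t ω - B s ω) i‖^2 ≤ ∑ _i : Fin d, a^2 := by
              refine Finset.sum_le_sum fun i _ => ?_
              have hco : (B t ω - B s ω) i = B t ω i - B s ω i := rfl
              rw [hco, Real.norm_eq_abs]
              exact pow_le_pow_left₀ (abs_nonneg _) (hcon i).le 2
        _ = (d:ℝ) * a^2 := by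
              rw [Finset.sum_const, Finset.card_univ, Fintype.card_fin, nsmul_eq_mul]
      calc Real.sqrt (∑ i : Fin d, ‖(B t ω - B s ω) i‖^2)
          ≤ Real.sqrt ((d:ℝ) * a^2) := Real.sqrt_le_sqrt hsum
      _ = Real.sqrt d * a := by
            rw [Real.sqrt_mul (Nat.cast_nonneg d), Real.sqrt_sq ha.le]
    have h1 : ‖v‖ ≤ ‖B t ω - B s ω + v‖ + ‖B t ω - B s ω‖ := by
      calc ‖v‖ = ‖(B t ω - B s ω + v) - (B t ω - B s ω)‖ := by congr 1; abel
      _ ≤ ‖B t ω - B s ω + v‖ + ‖B t ω - B s ω‖ := norm_sub_le _ _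
    have hsa : Real.sqrt d * a = 2^(k-1) * ε := by
      rw [hadef]
      field_simp
    nlinarith [hε, hpowge, hpow2, hnv, hω, h1, hY, hsa]
  -- measurability of coordinates
  have hSmeas : MeasurableSet {x : ℝ | a ≤ |x|} :=
    (isClosed_le continuous_const continuous_abs).measurableSet
  have hmeas : ∀ i : Fin d, AEMeasurable (fun ω => B t ω i - B s ω i) μ := by
    intro i
    by_contra h
    have h0 := congrArg (fun m : Measure ℝ => m Set.univ)
      ((Measure.map_of_not_aemeasurable h).symm.trans (hmap i))
    simp [measure_univ] at h0
  have hAi : ∀ i : Fin d, (μ {ω | a ≤ |B t ω i - B s ω i|}).toReal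
      ≤ 2 * Real.exp (-(a^2)/(4*v2)) := by
    intro i
    have hpre : μ {ω | a ≤ |B t ω i - B s ω i|} = (gaussianReal 0 v2) {x : ℝ | a ≤ |x|} := by
      rw [← hmap i, Measure.map_apply_of_aemeasurable (hmeas i) hSmeas]
      rfl
    rw [hpre]
    exact gauss_tail v2 hv2ne a ha.le
  -- union bound
  have hEA : μ {ω | ‖B t ω - B s ω + v‖ < 2*ε}
      ≤ ∑ i : Fin d, μ {ω | a ≤ |B t ω i - B s ω i|} :=
    (measure_mono hsub).trans (measure_iUnion_fintype_le μ _)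
  have hfin : ∀ i ∈ Finset.univ, μ {ω | a ≤ |B t ω i - B s ω i|} ≠ ⊤ :=
    fun i _ => measure_ne_top μ _
  have step1 : (μ {ω | ‖B t ω - B s ω + v‖ < 2*ε}).toReal
      ≤ ∑ i : Fin d, (μ {ω | a ≤ |B t ω i - B s ω i|}).toReal := by
    rw [← ENNReal.toReal_sum hfin]
    exact ENNReal.toReal_mono (ENNReal.sum_ne_top.mpr hfin) hEA
  have step2 : ∑ i : Fin d, (μ {ω | a ≤ |B t ω i - B s ω i|}).toReal
      ≤ (d:ℝ) * (2 * Real.exp (-(a^2)/(4*v2))) := by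
    calc ∑ i : Fin d, (μ {ω | a ≤ |B t ω i - B s ω i|}).toReal
        ≤ ∑ _i : Fin d, 2 * Real.exp (-(a^2)/(4*v2)) :=
          Finset.sum_le_sum fun i _ => hAi i
    _ = (d:ℝ) * (2 * Real.exp (-(a^2)/(4*v2))) := by
          rw [Finset.sum_const, Finset.card_univ, Fintype.card_fin, nsmul_eq_mul]
  -- exponent arithmetic
  have hexp : Real.exp (-(a^2)/(4*v2)) ≤ Real.exp (-(1/16) * L^2 / d) := by
    rw [Real.exp_le_exp]
    have hM : (0:ℝ) < (2^k*ε/L)^2 := by positivity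
    have ha2 : a^2 = (2^(k-1)*ε)^2 / d := by
      rw [hadef, div_pow, Real.sq_sqrt (Nat.cast_nonneg d)]
    have heq : (1/16) * L^2 / d = a^2 / (4*((2^k*ε/L)^2)) := by
      rw [ha2, hpow2]
      field_simp
      ring
    have hle : a^2 / (4*((2^k*ε/L)^2)) ≤ a^2 / (4*(v2:ℝ)) := by
      apply div_le_div_of_nonneg_left (by positivity) (by positivity)
      have : (v2:ℝ) ≤ (2^k*ε/L)^2 := by rw [hv2R]; exact hts
      linarith
    have h5 : (1/16) * L^2 / d ≤ a^2 / (4*(v2:ℝ)) := heq ▸ hle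
    have h6 : -(1/16) * L^2 / (d:ℝ) = -((1/16) * L^2 / d) := by ring
    rw [neg_div, h6]
    exact neg_le_neg h5
  calc (μ {ω | ‖B t ω - B s ω + v‖ < 2*ε}).toReal
      ≤ (d:ℝ) * (2 * Real.exp (-(a^2)/(4*v2))) := step1.trans step2
  _ ≤ (d:ℝ) * (2 * Real.exp (-(1/16) * L^2 / d)) := by
        have := mul_le_mul_of_nonneg_left hexp (by norm_num : (0:ℝ) ≤ 2)
        exact mul_le_mul_of_nonneg_left this (Nat.cast_nonneg d)
  _ = 2 * d * Real.exp (-(1/16) * L^2 / d) := by ring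
end
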